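/- arXiv:2210.06532 — 6 statements merged into one kernel-verified Lean document; each statement's English description precedes it below -/
import Mathlib

section
/- For every Borel probability measure ρ on ℝ^d and every integer N ≥ 2 one has C_N(ρ) ≤ C_{N+1}(ρ), and for every v ∈ C_0(ℝ^d) one has M_{N+1}(v) ≤ M_N(v). (The sequence of multimarginal costs is nondecreasing in the number of marginals, and the dual functionals M_N are nonincreasing in N.) -/
open MeasureTheory ENNReal Filter Topology
open scoped ZeroAtInfty

noncomputable section

/-- The pairwise interaction cost `c_N` on `(ℝ^d)^N`. -/
def pairCost (d : ℕ) (ℓ : ℝ → ℝ≥0∞) (N : ℕ)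
    (x : Fin N → EuclideanSpace ℝ (Fin d)) : ℝ≥0∞ :=
  (2 / ((N : ℝ≥0∞) * ((N : ℝ≥0∞) - 1))) *
    ∑ i : Fin N, ∑ j : Fin N, if i < j then ℓ (dist (x i) (x j)) else 0

/-- The set `Π_N(ρ)` of multimarginal transport plans. -/
def couplings (d : ℕ) (N : ℕ) (ρ : Measure (EuclideanSpace ℝ (Fin d))) :
    Set (Measure (Fin N → EuclideanSpace ℝ (Fin d))) :=
  {P | IsProbabilityMeasure P ∧ ∀ i : Fin N, P.map (fun x => x i) = ρ}

/-- The multimarginal optimal transport cost `C_N(ρ)`. -/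
def CN (d : ℕ) (ℓ : ℝ → ℝ≥0∞) (N : ℕ) (ρ : Measure (EuclideanSpace ℝ (Fin d))) : ℝ≥0∞ :=
  ⨅ P ∈ couplings d N ρ, ∫⁻ x, pairCost d ℓ N x ∂P

/-- `S_N v (x) = (1/N) ∑ v(x_j)`. -/
def SN (d : ℕ) (N : ℕ) (v : EuclideanSpace ℝ (Fin d) → ℝ)
    (x : Fin N → EuclideanSpace ℝ (Fin d)) : ℝ :=
  (∑ i, v (x i)) / N

/-- The dual functional `M_N(v) = sup_x (S_N v (x) - c_N(x))`, as an extended real. -/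
def MN (d : ℕ) (ℓ : ℝ → ℝ≥0∞) (N : ℕ) (v : EuclideanSpace ℝ (Fin d) → ℝ) : EReal :=
  ⨆ x : Fin N → EuclideanSpace ℝ (Fin d),
    ((SN d N v x : ℝ) : EReal) - ((pairCost d ℓ N x : ℝ≥0∞) : EReal)

/-- `M_∞(v) = inf_{N ≥ 2} M_N(v)`. -/
def Minf (d : ℕ) (ℓ : ℝ → ℝ≥0∞) (v : EuclideanSpace ℝ (Fin d) → ℝ) : EReal :=
  ⨅ N : ℕ, ⨅ _ : 2 ≤ N, MN d ℓ N v

/-- The relaxed multimarginal cost `overline{C_N}`, defined by biconjugation. -/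
def relCN (d : ℕ) (ℓ : ℝ → ℝ≥0∞) (N : ℕ)
    (ρ : Measure (EuclideanSpace ℝ (Fin d))) : EReal :=
  ⨆ v : C₀(EuclideanSpace ℝ (Fin d), ℝ),
    ((∫ x, v x ∂ρ : ℝ) : EReal) - MN d ℓ N (fun x => v x)

/-- The limit functional `C_∞`, Fenchel conjugate of `M_∞`. -/
def Cinf (d : ℕ) (ℓ : ℝ → ℝ≥0∞) (ρ : Measure (EuclideanSpace ℝ (Fin d))) : EReal :=
  ⨆ v : C₀(EuclideanSpace ℝ (Fin d), ℝ),
    ((∫ x, v x ∂ρ : ℝ) : EReal) - Minf d ℓ (fun x => v x)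

/-- The direct interaction energy `D(ρ) = ∬ ℓ(|x-y|) dρ dρ`. -/
def Denergy (d : ℕ) (ℓ : ℝ → ℝ≥0∞) (ρ : Measure (EuclideanSpace ℝ (Fin d))) : ℝ≥0∞ :=
  ∫⁻ p : EuclideanSpace ℝ (Fin d) × EuclideanSpace ℝ (Fin d),
    ℓ (dist p.1 p.2) ∂(ρ.prod ρ)

/-- The convolution potential `u_ρ(x) = ∫ ℓ(|x-y|) dρ(y)`. -/
def uPot (d : ℕ) (ℓ : ℝ → ℝ≥0∞) (ρ : Measure (EuclideanSpace ℝ (Fin d)))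
    (x : EuclideanSpace ℝ (Fin d)) : ℝ≥0∞ :=
  ∫⁻ y, ℓ (dist x y) ∂ρ

/-- `n_ε(B)`: the maximal cardinality of an `ε`-separated subset of `B`. -/
def packNum (d : ℕ) (ε : ℝ) (B : Set (EuclideanSpace ℝ (Fin d))) : ℕ :=
  sSup {n : ℕ | ∃ s : Finset (EuclideanSpace ℝ (Fin d)), ↑s ⊆ B ∧ s.card = n ∧
    ∀ x ∈ s, ∀ y ∈ s, x ≠ y → ε ≤ dist x y}

/-- The cube `Q_a = [-a/2, a/2]^d`. -/
def cube (d : ℕ) (a : ℝ) : Set (EuclideanSpace ℝ (Fin d)) :=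
  {x | ∀ i, |x i| ≤ a / 2}

/-- The packing constant `γ_d = inf_{k ≥ 1} S(Q_k)/k^d`. -/
def gammaPack (d : ℕ) : ℝ :=
  ⨅ k : ℕ, (packNum d 1 (cube d ((k + 1 : ℕ) : ℝ)) : ℝ) / ((k + 1 : ℕ) : ℝ) ^ d


/-! Deleting one of `N + 1` particles: every particle survives in `N` of the `N + 1` deletions and
every pair in `N - 1` of them, so `c_{N+1}` and `S_{N+1} v` are the averages of `c_N` and `S_N v`
over the deletions. Pushing a plan with `N + 1` marginals forward under a deletion gives a plan with
`N` marginals, whence `C_N ≤ C_{N+1}`; and an average of `S_N v - c_N` is at most its largest term,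
whence `M_{N+1} ≤ M_N`. -/

open Finset

section DoubleCounting

variable {ι M : Type*} [Fintype ι] [DecidableEq ι] [AddCommMonoid M]

theorem sum_sum_compl_singleton (f : ι → M) :
    ∑ k, ∑ i ∈ ({k}ᶜ : Finset ι), f i = (Fintype.card ι - 1) • ∑ i, f i := by
  rw [sum_comm' (t' := univ) (s' := fun i => {i}ᶜ) (by simp [eq_comm]), smul_sum]
  simp [card_compl]

theorem sum_sum_sum_compl_singleton {F : ι → ι → M} (hF : ∀ i, F i i = 0) :
    ∑ k, ∑ i ∈ ({k}ᶜ : Finset ι), ∑ j ∈ ({k}ᶜ : Finset ι), F i j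
      = (Fintype.card ι - 2) • ∑ i, ∑ j, F i j := by
  simp_rw [← sum_product']
  rw [sum_comm' (t' := univ) (s' := fun p => {p.1, p.2}ᶜ) (by simp [eq_comm]),
    univ_product_univ, smul_sum]
  refine sum_congr rfl fun ⟨i, j⟩ _ => ?_
  rw [sum_const]
  rcases eq_or_ne i j with rfl | hij
  · simp [hF]
  · rw [card_compl, card_pair hij]

end DoubleCounting

theorem sum_succAbove_eq_sum_compl_singleton {M : Type*} [AddCommMonoid M] {n : ℕ}
    (k : Fin (n + 1)) (f : Fin (n + 1) → M) :
    ∑ a, f (k.succAbove a) = ∑ i ∈ ({k}ᶜ : Finset (Fin (n + 1))), f i := by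
  rw [← Fin.image_succAbove_univ, sum_image Fin.succAbove_right_injective.injOn]

theorem ENNReal.div_mul_mul_cancel_right (a b : ℝ≥0∞) {c : ℝ≥0∞} (hc₀ : c ≠ 0) (hc : c ≠ ⊤) :
    a / (b * c) * c = a / b := by
  rw [← ENNReal.mul_div_right_comm, ENNReal.mul_div_mul_right _ _ hc₀ hc]

theorem MeasureTheory.sum_lintegral_le_lintegral_sum {α ι : Type*} [MeasurableSpace α]
    {μ : Measure α} (s : Finset ι) (f : ι → α → ℝ≥0∞) :
    ∑ i ∈ s, ∫⁻ a, f i a ∂μ ≤ ∫⁻ a, ∑ i ∈ s, f i a ∂μ := by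
  classical
  induction s using Finset.induction_on with
  | empty => simp
  | insert i s hi ih =>
    simp only [sum_insert hi]
    exact (add_le_add le_rfl ih).trans (le_lintegral_add _ _)

section Deletion

variable {d : ℕ}

theorem sum_pairCost_removeNth (ℓ : ℝ → ℝ≥0∞) {N : ℕ} (hN : 2 ≤ N)
    (x : Fin (N + 1) → EuclideanSpace ℝ (Fin d)) :
    ∑ k, pairCost d ℓ N (Fin.removeNth k x) = (N + 1) * pairCost d ℓ (N + 1) x := by
  have hpairs : ∀ k : Fin (N + 1), ∑ a : Fin N, ∑ b : Fin N,
      (if a < b then ℓ (dist (Fin.removeNth k x a) (Fin.removeNth k x b)) else 0)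
        = ∑ i ∈ ({k}ᶜ : Finset _), ∑ j ∈ ({k}ᶜ : Finset _),
            if i < j then ℓ (dist (x i) (x j)) else 0 := fun k => by
    rw [← sum_succAbove_eq_sum_compl_singleton k]
    refine sum_congr rfl fun a _ => ?_
    rw [← sum_succAbove_eq_sum_compl_singleton k]
    simp only [Fin.removeNth, Fin.succAbove_lt_succAbove_iff]
  have hN₁ : (N : ℝ≥0∞) - 1 ≠ 0 := by
    rw [← Nat.cast_one, ← ENNReal.natCast_sub]
    exact Nat.cast_ne_zero.mpr (by omega)
  have hcard : N + 1 - 2 = N - 1 := by omega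
  simp only [pairCost, ← mul_sum, hpairs,
    sum_sum_sum_compl_singleton (F := fun i j => if i < j then ℓ (dist (x i) (x j)) else 0)
      (fun i => by simp), Fintype.card_fin, hcard, nsmul_eq_mul, ← mul_assoc]
  -- both coefficients equal `2 / N`
  congr 1
  rw [ENNReal.natCast_sub, Nat.cast_one,
    ENNReal.div_mul_mul_cancel_right _ _ hN₁ (ENNReal.sub_ne_top (ENNReal.natCast_ne_top _)),
    Nat.cast_succ, ENNReal.add_sub_cancel_right ENNReal.one_ne_top, mul_comm,
    mul_comm _ (N : ℝ≥0∞), ENNReal.div_mul_mul_cancel_right _ _ (by simp) (by simp)]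

theorem sum_SN_removeNth {N : ℕ} (hN : N ≠ 0) (v : EuclideanSpace ℝ (Fin d) → ℝ)
    (x : Fin (N + 1) → EuclideanSpace ℝ (Fin d)) :
    ∑ k, SN d N v (Fin.removeNth k x) = (N + 1) * SN d (N + 1) v x := by
  simp only [SN, ← sum_div, Fin.removeNth]
  rw [sum_congr rfl fun k _ => sum_succAbove_eq_sum_compl_singleton k (fun i => v (x i)),
    sum_sum_compl_singleton, Fintype.card_fin, Nat.add_sub_cancel, nsmul_eq_mul]
  push_cast
  field_simp

theorem map_removeNth_mem_couplings {N : ℕ} {ρ : Measure (EuclideanSpace ℝ (Fin d))}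
    {P : Measure (Fin (N + 1) → EuclideanSpace ℝ (Fin d))} (hP : P ∈ couplings d (N + 1) ρ)
    (k : Fin (N + 1)) :
    P.map (Fin.removeNth k) ∈ couplings d N ρ := by
  have hk : Measurable (Fin.removeNth k : (Fin (N + 1) → EuclideanSpace ℝ (Fin d)) → _) :=
    measurable_pi_lambda _ fun a => measurable_pi_apply _
  have : IsProbabilityMeasure P := hP.1
  refine ⟨Measure.isProbabilityMeasure_map hk.aemeasurable, fun i => ?_⟩
  rw [Measure.map_map (measurable_pi_apply i) hk]
  exact hP.2 (k.succAbove i)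

theorem CN_le_CN_succ (ℓ : ℝ → ℝ≥0∞) {N : ℕ} (hN : 2 ≤ N)
    (ρ : Measure (EuclideanSpace ℝ (Fin d))) :
    CN d ℓ N ρ ≤ CN d ℓ (N + 1) ρ := by
  refine le_iInf₂ fun P hP => ?_
  have hN₀ : (N + 1 : ℝ≥0∞) ≠ 0 := by simp
  have hN_top : (N + 1 : ℝ≥0∞) ≠ ⊤ := by simp
  refine (ENNReal.mul_le_mul_iff_right hN₀ hN_top).mp ?_
  calc (N + 1) * CN d ℓ N ρ = ∑ _k : Fin (N + 1), CN d ℓ N ρ := by simp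
    _ ≤ ∑ k, ∫⁻ x, pairCost d ℓ N (Fin.removeNth k x) ∂P :=
        sum_le_sum fun k _ =>
          (iInf₂_le _ (map_removeNth_mem_couplings hP k)).trans (lintegral_map_le _ _)
    _ ≤ ∫⁻ x, ∑ k, pairCost d ℓ N (Fin.removeNth k x) ∂P := sum_lintegral_le_lintegral_sum _ _
    _ = (N + 1) * ∫⁻ x, pairCost d ℓ (N + 1) x ∂P := by
        simp_rw [sum_pairCost_removeNth ℓ hN, lintegral_const_mul' _ _ hN_top]

theorem exists_SN_sub_pairCost_le_removeNth (ℓ : ℝ → ℝ≥0∞) {N : ℕ} (hN : 2 ≤ N)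
    (v : EuclideanSpace ℝ (Fin d) → ℝ) {x : Fin (N + 1) → EuclideanSpace ℝ (Fin d)}
    (hx : pairCost d ℓ (N + 1) x ≠ ⊤) :
    ∃ k, ((SN d (N + 1) v x : ℝ) : EReal) - (pairCost d ℓ (N + 1) x : EReal)
      ≤ ((SN d N v (Fin.removeNth k x) : ℝ) : EReal)
          - (pairCost d ℓ N (Fin.removeNth k x) : EReal) := by
  have hsum := sum_pairCost_removeNth ℓ hN x
  have hfin : ∀ k, pairCost d ℓ N (Fin.removeNth k x) ≠ ⊤ := fun k =>
    ENNReal.sum_ne_top.mp (hsum ▸ ENNReal.mul_ne_top (by simp) hx) k (mem_univ k)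
  have hreal : ∑ _k : Fin (N + 1), (SN d (N + 1) v x - (pairCost d ℓ (N + 1) x).toReal)
      ≤ ∑ k, (SN d N v (Fin.removeNth k x) - (pairCost d ℓ N (Fin.removeNth k x)).toReal) := by
    rw [sum_sub_distrib, sum_sub_distrib, sum_SN_removeNth (by omega),
      ← ENNReal.toReal_sum fun k _ => hfin k, hsum, ENNReal.toReal_mul]
    simp [ENNReal.toReal_add]
  obtain ⟨k, -, hk⟩ := exists_le_of_sum_le univ_nonempty hreal
  refine ⟨k, ?_⟩
  rw [← EReal.coe_ennreal_toReal hx, ← EReal.coe_ennreal_toReal (hfin k), ← EReal.coe_sub,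
    ← EReal.coe_sub]
  exact EReal.coe_le_coe_iff.mpr hk

theorem MN_succ_le_MN (ℓ : ℝ → ℝ≥0∞) {N : ℕ} (hN : 2 ≤ N) (v : EuclideanSpace ℝ (Fin d) → ℝ) :
    MN d ℓ (N + 1) v ≤ MN d ℓ N v := by
  refine iSup_le fun x => ?_
  by_cases hx : pairCost d ℓ (N + 1) x = ⊤
  · simp [hx]
  · obtain ⟨k, hk⟩ := exists_SN_sub_pairCost_le_removeNth ℓ hN v hx
    exact hk.trans (le_iSup (fun y => ((SN d N v y : ℝ) : EReal) - (pairCost d ℓ N y : EReal)) _)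

end Deletion

theorem statement_0_general (d : ℕ) (ℓ : ℝ → ℝ≥0∞)
    (N : ℕ) (hN : 2 ≤ N)
    (ρ : Measure (EuclideanSpace ℝ (Fin d)))
    (v : C₀(EuclideanSpace ℝ (Fin d), ℝ)) :
    CN d ℓ N ρ ≤ CN d ℓ (N + 1) ρ ∧
      MN d ℓ (N + 1) (fun x => v x) ≤ MN d ℓ N (fun x => v x) :=
  ⟨CN_le_CN_succ ℓ hN ρ, MN_succ_le_MN ℓ hN _⟩

/-- monotonicity of `C_N` in `N` and of `M_N` (nonincreasing). -/
theorem statement_0 (d : ℕ) (hd : 1 ≤ d) (ℓ : ℝ → ℝ≥0∞)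
    (hl_lsc : LowerSemicontinuousOn ℓ (Set.Ici 0))
    (hl0 : 0 < ℓ 0)
    (hl_decay : Filter.Tendsto ℓ Filter.atTop (nhds 0))
    (N : ℕ) (hN : 2 ≤ N)
    (ρ : Measure (EuclideanSpace ℝ (Fin d))) (hρ : IsProbabilityMeasure ρ)
    (v : C₀(EuclideanSpace ℝ (Fin d), ℝ)) :
    CN d ℓ N ρ ≤ CN d ℓ (N + 1) ρ ∧
      MN d ℓ (N + 1) (fun x => v x) ≤ MN d ℓ N (fun x => v x) :=
  statement_0_general d ℓ N hN ρ v

end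
end

section
/- For every v ∈ C_0(ℝ^d) and every integer N ≥ 2: (i) sup{∫ v dρ − C_N(ρ) : ρ a Borel probability measure on ℝ^d} = M_N(v), i.e. the Fenchel conjugate of C_N equals M_N; (ii) M_N(v) = M_N(v₊), where v₊ = max(v,0); (iii) (1/N)·sup v₊ ≤ M_N(v) ≤ sup v₊. In particular M_N(v) ≥ 0. -/
open MeasureTheory ENNReal Filter Topology
open scoped ZeroAtInfty

noncomputable section

/-!
Moving a point of a configuration off to infinity changes `S_N v` and `c_N` by arbitrarily
little, except that it deletes that point's contribution, since `v` and `ℓ` both vanish at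
infinity. Moving away the points where `v < 0` gives `M_N(v) ≥ M_N(v₊)`, and keeping a single
point near a maximiser of `v₊` while moving away all the others gives `M_N(v₊) ≥ (1/N) sup v₊`;
the upper bound `M_N(v) ≤ sup v₊` holds because `c_N ≥ 0`.

For the duality, integrating `S_N v - M_N(v) ≤ c_N` against a coupling of `ρ` gives
`∫ v dρ - C_N(ρ) ≤ M_N(v)`. Conversely, the empirical measure of a configuration `x` is coupled
with itself by the uniformly chosen cyclic shift of `x`, which has cost `c_N(x)` since `c_N` is
symmetric; hence `S_N v(x) - c_N(x) ≤ ∫ v d(empirical) - C_N(empirical)`.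
-/

open scoped BoundedContinuousFunction

theorem two_nsmul_sum_ite_lt {ι M : Type*} [Fintype ι] [LinearOrder ι] [AddCommMonoid M]
    (F : ι → ι → M) (hF : ∀ i j, F i j = F j i) :
    2 • ∑ i, ∑ j, (if i < j then F i j else 0) = ∑ i, ∑ j, if i ≠ j then F i j else 0 := by
  have hswap : ∑ i, ∑ j, (if j < i then F i j else 0) = ∑ i, ∑ j, (if i < j then F i j else 0) := by
    rw [Finset.sum_comm]
    exact Finset.sum_congr rfl fun i _ => Finset.sum_congr rfl fun j _ => by rw [hF]
  rw [two_nsmul]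
  nth_rewrite 2 [← hswap]
  simp_rw [← Finset.sum_add_distrib]
  refine Finset.sum_congr rfl fun i _ => Finset.sum_congr rfl fun j _ => ?_
  rcases lt_trichotomy i j with h | rfl | h
  · simp [h, h.ne, h.not_gt]
  · simp
  · simp [h, h.ne', h.not_gt]

theorem sum_ite_lt_comp_equiv {ι : Type*} [Fintype ι] [LinearOrder ι]
    (F : ι → ι → ℝ≥0∞) (hF : ∀ i j, F i j = F j i) (e : ι ≃ ι) :
    ∑ i, ∑ j, (if i < j then F (e i) (e j) else 0) = ∑ i, ∑ j, if i < j then F i j else 0 := by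
  refine (ENNReal.mul_right_inj two_ne_zero ofNat_ne_top).1 ?_
  rw [two_mul, two_mul, ← two_nsmul, ← two_nsmul, two_nsmul_sum_ite_lt F hF,
    two_nsmul_sum_ite_lt _ fun i j => hF (e i) (e j)]
  exact Fintype.sum_equiv e _ _ fun i => Fintype.sum_equiv e _ _ fun j => by
    simp only [ne_eq, e.injective.eq_iff]

theorem EReal.coe_le_of_forall_pos_sub_mul_le {a C : ℝ} {g : EReal}
    (h : ∀ η > 0, ((a - C * η : ℝ) : EReal) ≤ g) : (a : EReal) ≤ g := by
  have hlim : Tendsto (fun η : ℝ => a - C * η) (𝓝[>] 0) (𝓝 a) :=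
    ((Continuous.tendsto' (by fun_prop) 0 a (by simp)).mono_left nhdsWithin_le_nhds)
  exact le_of_tendsto ((continuous_coe_real_ereal.tendsto a).comp hlim)
    (eventually_nhdsWithin_of_forall h)

theorem ENNReal.ofReal_sub_le_iff {a r : ℝ} {c : ℝ≥0∞} :
    ENNReal.ofReal (a - r) ≤ c ↔ (a : EReal) - c ≤ r := by
  rcases eq_or_ne c ⊤ with rfl | hc
  · simp
  rw [← EReal.coe_ennreal_toReal hc, ← EReal.coe_sub, EReal.coe_le_coe_iff,
    ENNReal.ofReal_le_iff_le_toReal hc]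
  constructor <;> intro h <;> linarith

theorem ofReal_integral_le_lintegral_ofReal {α : Type*} [MeasurableSpace α] {μ : Measure α}
    {f : α → ℝ} (hf : Integrable f μ) :
    ENNReal.ofReal (∫ x, f x ∂μ) ≤ ∫⁻ x, ENNReal.ofReal (f x) ∂μ :=
  calc ENNReal.ofReal (∫ x, f x ∂μ)
      ≤ ENNReal.ofReal (∫ x, max (f x) 0 ∂μ) :=
        ENNReal.ofReal_le_ofReal (integral_mono hf hf.pos_part fun x => le_max_left _ _)
    _ = ∫⁻ x, ENNReal.ofReal (f x) ∂μ := by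
        rw [ofReal_integral_eq_lintegral_ofReal hf.pos_part
          (ae_of_all _ fun x => le_max_right _ _)]
        simp

theorem exists_move_far {E : Type*} [NormedAddCommGroup E] [NormedSpace ℝ E] [Nontrivial E]
    {N : ℕ} (x : Fin N → E) (S : Finset (Fin N)) (R : ℝ) :
    ∃ x' : Fin N → E, (∀ i ∉ S, x' i = x i) ∧ (∀ i ∈ S, R ≤ ‖x' i‖) ∧
      ∀ i j, i ≠ j → i ∈ S → R ≤ dist (x' i) (x' j) := by
  classical
  obtain ⟨e, he⟩ := exists_norm_eq E zero_le_one
  set A := ∑ k, ‖x k‖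
  have hA : 0 ≤ A := Finset.sum_nonneg fun k _ => norm_nonneg _
  have hxA : ∀ k, ‖x k‖ ≤ A := fun k =>
    Finset.single_le_sum (fun k _ => norm_nonneg (x k)) (Finset.mem_univ k)
  set t : Fin N → ℝ := fun i => A + ((i : ℕ) + 1) * |R|
  set x' : Fin N → E := fun i => if i ∈ S then t i • e else x i
  have hnorm : ∀ i ∈ S, ‖x' i‖ = t i := fun i hi => by
    simp only [x', if_pos hi, norm_smul, he, mul_one, Real.norm_eq_abs]
    exact abs_of_nonneg (by positivity)
  have ht : ∀ i, A + |R| ≤ t i := fun i => by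
    have : 0 ≤ ((i : ℕ) : ℝ) * |R| := by positivity
    simp only [t]; linarith
  refine ⟨x', fun i hi => if_neg hi, fun i hi => ?_, fun i j hij hi => ?_⟩
  · rw [hnorm i hi]; linarith [le_abs_self R, ht i]
  have hdist : |‖x' i‖ - ‖x' j‖| ≤ dist (x' i) (x' j) :=
    (abs_norm_sub_norm_le _ _).trans_eq (dist_eq_norm _ _).symm
  refine (le_abs_self R).trans (le_trans ?_ hdist)
  rw [hnorm i hi]
  by_cases hj : j ∈ S
  · rw [hnorm j hj]
    have : 1 ≤ |((i : ℕ) : ℝ) - (j : ℕ)| := by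
      rcases Nat.lt_or_gt_of_ne (Fin.val_injective.ne hij) with h | h
      · have : ((i : ℕ) : ℝ) + 1 ≤ (j : ℕ) := by exact_mod_cast h
        exact le_abs.2 (Or.inr (by linarith))
      · have : ((j : ℕ) : ℝ) + 1 ≤ (i : ℕ) := by exact_mod_cast h
        exact le_abs.2 (Or.inl (by linarith))
    calc |R| = 1 * |R| := (one_mul _).symm
      _ ≤ |((i : ℕ) : ℝ) - (j : ℕ)| * |R| := by gcongr
      _ = |t i - t j| := by
        rw [show t i - t j = (((i : ℕ) : ℝ) - (j : ℕ)) * |R| by simp only [t]; ring,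
          abs_mul, abs_abs]
  · have : ‖x' j‖ = ‖x j‖ := by simp only [x', if_neg hj]
    rw [this]
    exact (le_abs_self _).trans' (by linarith [ht i, hxA j])

theorem exists_move_far_eventually {E : Type*} [NormedAddCommGroup E] [NormedSpace ℝ E]
    [Nontrivial E] {N : ℕ} (x : Fin N → E) (S : Finset (Fin N)) {P : E → Prop} {Q : ℝ → Prop}
    (hP : ∀ᶠ z in Bornology.cobounded E, P z) (hQ : ∀ᶠ r in atTop, Q r) :
    ∃ x' : Fin N → E, (∀ i ∉ S, x' i = x i) ∧ (∀ i ∈ S, P (x' i)) ∧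
      ∀ i j, i ≠ j → i ∈ S → Q (dist (x' i) (x' j)) := by
  obtain ⟨R₁, -, hR₁⟩ := hasBasis_cobounded_norm.eventually_iff.1 hP
  obtain ⟨R₂, hR₂⟩ := eventually_atTop.1 hQ
  obtain ⟨x', hfix, hnorm, hdist⟩ := exists_move_far x S (max R₁ R₂)
  exact ⟨x', hfix, fun i hi => hR₁ ((le_max_left _ _).trans (hnorm i hi)),
    fun i j hij hi => hR₂ _ ((le_max_right _ _).trans (hdist i j hij hi))⟩

theorem two_div_mul_sub_one_le_one {N : ℕ} (hN : 2 ≤ N) :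
    2 / ((N : ℝ≥0∞) * ((N : ℝ≥0∞) - 1)) ≤ 1 := by
  refine ENNReal.div_le_of_le_mul ?_
  have h1 : (1 : ℝ≥0∞) ≤ N - 1 := ENNReal.le_sub_of_add_le_left one_ne_top (by exact_mod_cast hN)
  calc (2 : ℝ≥0∞) = 2 * 1 := (mul_one 2).symm
    _ ≤ 1 * (N * (N - 1)) := by rw [one_mul]; gcongr; exact_mod_cast hN

theorem pairCost_comp_equiv (d : ℕ) (ℓ : ℝ → ℝ≥0∞) (N : ℕ)
    (x : Fin N → EuclideanSpace ℝ (Fin d)) (e : Fin N ≃ Fin N) :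
    pairCost d ℓ N (x ∘ e) = pairCost d ℓ N x := by
  rw [pairCost, pairCost]
  congr 1
  exact sum_ite_lt_comp_equiv (fun i j => ℓ (dist (x i) (x j)))
    (fun i j => by rw [dist_comm]) e

theorem pairCost_le_add {d N : ℕ} (hN : 2 ≤ N) {ℓ ℓ' : ℝ → ℝ≥0∞}
    {x y : Fin N → EuclideanSpace ℝ (Fin d)} {δ : ℝ≥0∞}
    (h : ∀ i j, i < j → ℓ (dist (x i) (x j)) ≤ ℓ' (dist (y i) (y j)) + δ) :
    pairCost d ℓ N x ≤ pairCost d ℓ' N y + N ^ 2 * δ := by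
  set a := 2 / ((N : ℝ≥0∞) * ((N : ℝ≥0∞) - 1))
  calc pairCost d ℓ N x
      ≤ a * ∑ i : Fin N, ∑ j : Fin N,
          ((if i < j then ℓ' (dist (y i) (y j)) else 0) + δ) := by
        rw [pairCost]
        gcongr with i _ j _
        split_ifs with hij
        · exact h i j hij
        · exact zero_le
    _ = pairCost d ℓ' N y + a * (N ^ 2 * δ) := by
        simp [pairCost, a, Finset.sum_add_distrib, mul_add, sq, mul_assoc]
    _ ≤ pairCost d ℓ' N y + N ^ 2 * δ :=
        add_le_add_right (mul_le_of_le_one_left zero_le (two_div_mul_sub_one_le_one hN)) _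

@[simp]
theorem pairCost_zero (d N : ℕ) (x : Fin N → EuclideanSpace ℝ (Fin d)) :
    pairCost d 0 N x = 0 := by
  simp [pairCost]

-- `(uniformFin N).map x` is the empirical measure `(1/N) ∑ δ_{x_i}` of `x`.
def uniformFin (N : ℕ) : Measure (Fin N) := (N : ℝ≥0∞)⁻¹ • Measure.count

section

variable {d N : ℕ} {ℓ : ℝ → ℝ≥0∞}

instance [NeZero N] : IsProbabilityMeasure (uniformFin N) :=
  ⟨by simp [uniformFin, ENNReal.inv_mul_cancel (NeZero.ne _) (natCast_ne_top N)]⟩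

theorem map_uniformFin_equiv (e : Fin N ≃ Fin N) : (uniformFin N).map e = uniformFin N := by
  rw [uniformFin, Measure.map_smul]
  congr 1
  ext s hs
  rw [Measure.map_apply (measurable_of_finite e) hs, Measure.count_apply hs,
    Measure.count_apply (measurable_of_finite e hs), Set.encard_preimage_of_bijective e.bijective]

theorem integral_map_uniformFin {v : EuclideanSpace ℝ (Fin d) → ℝ} (hv : Continuous v)
    (x : Fin N → EuclideanSpace ℝ (Fin d)) :
    ∫ z, v z ∂(uniformFin N).map x = SN d N v x := by
  rw [integral_map (measurable_of_finite x).aemeasurable hv.aestronglyMeasurable, uniformFin,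
    integral_smul_measure, integral_count, SN]
  simp [div_eq_inv_mul]

theorem map_shift_mem_couplings [NeZero N] (x : Fin N → EuclideanSpace ℝ (Fin d)) :
    (uniformFin N).map (fun k j => x (j + k)) ∈ couplings d N ((uniformFin N).map x) := by
  refine ⟨Measure.isProbabilityMeasure_map (measurable_of_finite _).aemeasurable, fun i => ?_⟩
  conv_rhs => rw [← map_uniformFin_equiv (Equiv.addLeft i)]
  rw [Measure.map_map (measurable_pi_apply i) (measurable_of_finite _),
    Measure.map_map (measurable_of_finite _) (measurable_of_finite _)]
  rfl

theorem CN_map_uniformFin_le [NeZero N] (x : Fin N → EuclideanSpace ℝ (Fin d)) :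
    CN d ℓ N ((uniformFin N).map x) ≤ pairCost d ℓ N x := by
  calc CN d ℓ N ((uniformFin N).map x)
      ≤ ∫⁻ y, pairCost d ℓ N y ∂(uniformFin N).map (fun k j => x (j + k)) :=
        biInf_le _ (map_shift_mem_couplings x)
    _ ≤ ∫⁻ k, pairCost d ℓ N (x ∘ Equiv.addRight k) ∂uniformFin N := lintegral_map_le _ _
    _ = pairCost d ℓ N x := by simp only [pairCost_comp_equiv]; simp

theorem SN_le_SN_add (hN : N ≠ 0) {v w : EuclideanSpace ℝ (Fin d) → ℝ}
    {x y : Fin N → EuclideanSpace ℝ (Fin d)} {η : ℝ} (h : ∀ i, v (x i) ≤ w (y i) + η) :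
    SN d N v x ≤ SN d N w y + η := by
  have hN' : (0 : ℝ) < N := by positivity
  rw [SN, SN, div_add' _ _ _ hN'.ne', div_le_div_iff_of_pos_right hN']
  calc ∑ i, v (x i) ≤ ∑ i, (w (y i) + η) := Finset.sum_le_sum fun i _ => h i
    _ = ∑ i, w (y i) + η * N := by simp [Finset.sum_add_distrib, mul_comm]

theorem MN_mono {v w : EuclideanSpace ℝ (Fin d) → ℝ} (h : ∀ z, v z ≤ w z) :
    MN d ℓ N v ≤ MN d ℓ N w := by
  refine iSup_mono fun x => EReal.sub_le_sub ?_ le_rfl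
  exact_mod_cast div_le_div_of_nonneg_right (Finset.sum_le_sum fun i _ => h (x i))
    (Nat.cast_nonneg N)

theorem MN_le_of_forall_le (hN : N ≠ 0) {v : EuclideanSpace ℝ (Fin d) → ℝ} {B : ℝ}
    (h : ∀ z, v z ≤ B) : MN d ℓ N v ≤ B := by
  refine iSup_le fun x => ?_
  have hS : SN d N v x ≤ B := by
    simpa [SN, hN] using SN_le_SN_add hN (w := fun _ => B) (y := x) (η := 0) fun i => by
      simpa using h (x i)
  calc ((SN d N v x : ℝ) : EReal) - pairCost d ℓ N x ≤ SN d N v x - (0 : ℝ≥0∞) :=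
        EReal.sub_le_sub le_rfl (EReal.coe_ennreal_nonneg _)
    _ ≤ B := by simpa using hS

theorem coe_sub_le_MN {v : EuclideanSpace ℝ (Fin d) → ℝ} (x : Fin N → EuclideanSpace ℝ (Fin d))
    {a : ℝ} {C : ℝ≥0∞} (hS : a ≤ SN d N v x) (hc : pairCost d ℓ N x ≤ C) (hC : C ≠ ⊤) :
    ((a - C.toReal : ℝ) : EReal) ≤ MN d ℓ N v :=
  calc ((a - C.toReal : ℝ) : EReal) = (a : EReal) - C := by
        rw [EReal.coe_sub, EReal.coe_ennreal_toReal hC]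
    _ ≤ (SN d N v x : EReal) - pairCost d ℓ N x :=
        EReal.sub_le_sub (EReal.coe_le_coe_iff.2 hS) (EReal.coe_ennreal_le_coe_ennreal_iff.2 hc)
    _ ≤ MN d ℓ N v := le_iSup (fun y => ((SN d N v y : ℝ) : EReal) - pairCost d ℓ N y) x

theorem MN_max_zero_le [Nontrivial (EuclideanSpace ℝ (Fin d))] (hN : 2 ≤ N)
    (hℓ : Tendsto ℓ atTop (𝓝 0)) {v : EuclideanSpace ℝ (Fin d) → ℝ}
    (hv : Tendsto v (Bornology.cobounded _) (𝓝 0)) :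
    MN d ℓ N (fun z => max (v z) 0) ≤ MN d ℓ N v := by
  classical
  refine iSup_le fun x => ?_
  rcases eq_or_ne (pairCost d ℓ N x) ⊤ with hcx | hcx
  · simp [hcx]
  rw [← EReal.coe_ennreal_toReal hcx, ← EReal.coe_sub]
  refine EReal.coe_le_of_forall_pos_sub_mul_le (C := 1 + N ^ 2) fun η hη => ?_
  -- push the points where `v < 0` to infinity, where `v > -η` and all interactions are `< η`
  set S := Finset.univ.filter fun i => v (x i) < 0
  obtain ⟨x', hfix, hvx', hℓx'⟩ := exists_move_far_eventually x S
    (hv.eventually (lt_mem_nhds (neg_lt_zero.2 hη)))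
    (hℓ.eventually (gt_mem_nhds (ENNReal.ofReal_pos.2 hη)))
  have hS : SN d N (fun z => max (v z) 0) x - η ≤ SN d N v x' := by
    refine sub_le_iff_le_add.2 (SN_le_SN_add (by omega) fun i => ?_)
    by_cases hi : v (x i) < 0
    · have := hvx' i (by simpa [S] using hi)
      rw [max_eq_right hi.le]; linarith
    · rw [hfix i (by simpa [S] using hi), max_eq_left (not_lt.1 hi)]
      linarith
  have hc : pairCost d ℓ N x' ≤ pairCost d ℓ N x + N ^ 2 * ENNReal.ofReal η := by
    refine pairCost_le_add hN fun i j hij => ?_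
    by_cases hi : i ∈ S
    · exact (hℓx' i j hij.ne hi).le.trans le_add_self
    by_cases hj : j ∈ S
    · rw [dist_comm]; exact (hℓx' j i hij.ne' hj).le.trans le_add_self
    rw [hfix i hi, hfix j hj]
    exact le_self_add
  have hC : pairCost d ℓ N x + N ^ 2 * ENNReal.ofReal η ≠ ⊤ := by finiteness
  convert coe_sub_le_MN x' hS hc hC using 2
  rw [ENNReal.toReal_add hcx (by finiteness), ENNReal.toReal_mul, ENNReal.toReal_ofReal hη.le]
  simp; ring

theorem one_div_mul_iSup_le_MN [Nontrivial (EuclideanSpace ℝ (Fin d))] (hN : 2 ≤ N)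
    (hℓ : Tendsto ℓ atTop (𝓝 0)) {w : EuclideanSpace ℝ (Fin d) → ℝ} (hw : ∀ z, 0 ≤ w z) :
    (((1 / (N : ℝ)) * ⨆ z, w z : ℝ) : EReal) ≤ MN d ℓ N w := by
  refine EReal.coe_le_of_forall_pos_sub_mul_le (C := 1 / N + N ^ 2) fun η hη => ?_
  obtain ⟨y, hy⟩ := exists_lt_of_lt_ciSup (sub_lt_self (⨆ z, w z) hη)
  -- keep one point at `y` and push the others to infinity
  set i₀ : Fin N := ⟨0, by omega⟩
  obtain ⟨x', hfix, -, hℓx'⟩ := exists_move_far_eventually (fun _ => y) (Finset.univ.erase i₀)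
    (P := fun _ => True) (Eventually.of_forall fun _ => trivial)
    (hℓ.eventually (gt_mem_nhds (ENNReal.ofReal_pos.2 hη)))
  have hS : w y / N ≤ SN d N w x' := by
    rw [SN, ← hfix i₀ (by simp)]
    gcongr
    exact Finset.single_le_sum (fun i _ => hw (x' i)) (Finset.mem_univ i₀)
  have hc : pairCost d ℓ N x' ≤ N ^ 2 * ENNReal.ofReal η := by
    have h := pairCost_le_add (ℓ' := 0) (y := x') hN fun i j hij => by
      have hj : j ∈ Finset.univ.erase i₀ := Finset.mem_erase.2
        ⟨((Fin.le_iff_val_le_val.2 (Nat.zero_le i)).trans_lt hij).ne', Finset.mem_univ j⟩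
      rw [dist_comm]
      exact (hℓx' j i hij.ne' hj).le.trans le_add_self
    simpa using h
  refine le_trans ?_ (coe_sub_le_MN x' hS hc (by finiteness))
  rw [EReal.coe_le_coe_iff, ENNReal.toReal_mul, ENNReal.toReal_ofReal hη.le]
  have : (1 / (N : ℝ)) * ((⨆ z, w z) - η) ≤ w y / N := by
    rw [one_div_mul_eq_div]; gcongr
  simp only [ENNReal.toReal_pow, ENNReal.toReal_natCast]
  linarith

theorem integrable_SN (v : EuclideanSpace ℝ (Fin d) →ᵇ ℝ)
    (P : Measure (Fin N → EuclideanSpace ℝ (Fin d))) [IsFiniteMeasure P] :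
    Integrable (SN d N v) P :=
  (integrable_finsetSum _ fun i _ =>
    (v.compContinuous (ContinuousMap.eval i)).integrable P).div_const (N : ℝ)

theorem integral_SN_of_mem_couplings (hN : N ≠ 0) {ρ : Measure (EuclideanSpace ℝ (Fin d))}
    {P : Measure (Fin N → EuclideanSpace ℝ (Fin d))} (hP : P ∈ couplings d N ρ)
    (v : EuclideanSpace ℝ (Fin d) →ᵇ ℝ) :
    ∫ y, SN d N v y ∂P = ∫ z, v z ∂ρ := by
  have := hP.1
  have hmarg : ∀ i, ∫ y, v (y i) ∂P = ∫ z, v z ∂ρ := fun i => by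
    rw [← hP.2 i, integral_map (measurable_pi_apply i).aemeasurable
      v.continuous.aestronglyMeasurable]
  simp only [SN]
  rw [integral_div, integral_finsetSum _ fun i _ => ?_]
  · simp [hmarg, hN]
  · exact (v.compContinuous (ContinuousMap.eval i)).integrable P

theorem sub_CN_le_of_MN_le (hN : N ≠ 0) (v : EuclideanSpace ℝ (Fin d) →ᵇ ℝ) {r : ℝ}
    (hr : MN d ℓ N v ≤ r) (ρ : Measure (EuclideanSpace ℝ (Fin d))) [IsProbabilityMeasure ρ] :
    ((∫ z, v z ∂ρ : ℝ) : EReal) - CN d ℓ N ρ ≤ r := by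
  refine ENNReal.ofReal_sub_le_iff.1 (le_iInf₂ fun P hP => ?_)
  have := hP.1
  have hpt : ∀ y, ENNReal.ofReal (SN d N v y - r) ≤ pairCost d ℓ N y := fun y =>
    ENNReal.ofReal_sub_le_iff.2 <|
      (le_iSup (fun y => ((SN d N v y : ℝ) : EReal) - pairCost d ℓ N y) y).trans hr
  calc ENNReal.ofReal (∫ z, v z ∂ρ - r) = ENNReal.ofReal (∫ y, (SN d N v y - r) ∂P) := by
        rw [integral_sub (integrable_SN v P) (integrable_const r),
          integral_SN_of_mem_couplings hN hP]
        simp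
    _ ≤ ∫⁻ y, ENNReal.ofReal (SN d N v y - r) ∂P :=
        ofReal_integral_le_lintegral_ofReal ((integrable_SN v P).sub (integrable_const r))
    _ ≤ ∫⁻ y, pairCost d ℓ N y ∂P := lintegral_mono hpt

theorem iSup_sub_CN_eq_MN [NeZero N] (v : EuclideanSpace ℝ (Fin d) →ᵇ ℝ) :
    (⨆ ρ : {ρ : Measure (EuclideanSpace ℝ (Fin d)) // IsProbabilityMeasure ρ},
        ((∫ x, v x ∂ρ.1 : ℝ) : EReal) - CN d ℓ N ρ.1) = MN d ℓ N v := by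
  refine le_antisymm (EReal.le_of_forall_lt_iff_le.1 fun r hr => iSup_le fun ρ => ?_)
    (iSup_le fun x => ?_)
  · have := ρ.2
    exact sub_CN_le_of_MN_le (NeZero.ne N) v hr.le ρ.1
  · refine le_trans ?_ (le_iSup _ ⟨(uniformFin N).map x,
      Measure.isProbabilityMeasure_map (measurable_of_finite x).aemeasurable⟩)
    exact EReal.sub_le_sub (EReal.coe_le_coe_iff.2 (integral_map_uniformFin v.continuous x).ge)
      (EReal.coe_ennreal_le_coe_ennreal_iff.2 (CN_map_uniformFin_le x))

end

theorem statement_1_general (d : ℕ) (hd : 1 ≤ d) (ℓ : ℝ → ℝ≥0∞)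
    (hl_decay : Filter.Tendsto ℓ Filter.atTop (nhds 0))
    (N : ℕ) (hN : 2 ≤ N)
    (v : C₀(EuclideanSpace ℝ (Fin d), ℝ)) :
    (⨆ ρ : {ρ : Measure (EuclideanSpace ℝ (Fin d)) // IsProbabilityMeasure ρ},
        ((∫ x, v x ∂ρ.1 : ℝ) : EReal) - ((CN d ℓ N ρ.1 : ℝ≥0∞) : EReal))
      = MN d ℓ N (fun x => v x) ∧
    MN d ℓ N (fun x => v x) = MN d ℓ N (fun x => max (v x) 0) ∧
    (((1 / (N : ℝ)) * (⨆ x, max (v x) 0) : ℝ) : EReal) ≤ MN d ℓ N (fun x => v x) ∧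
    MN d ℓ N (fun x => v x) ≤ (((⨆ x, max (v x) 0) : ℝ) : EReal) ∧
    (0 : EReal) ≤ MN d ℓ N (fun x => v x) := by
  have : Nonempty (Fin d) := ⟨⟨0, hd⟩⟩
  have : NeZero N := ⟨by omega⟩
  have hv : Tendsto v (Bornology.cobounded _) (𝓝 0) :=
    Metric.cobounded_eq_cocompact (α := EuclideanSpace ℝ (Fin d)) ▸ v.zero_at_infty'
  have hbdd : BddAbove (Set.range fun x => max (v x) 0) :=
    ⟨‖v.toBCF‖, Set.forall_mem_range.2 fun x =>
      max_le ((le_abs_self _).trans (v.toBCF.norm_coe_le_norm x)) (norm_nonneg _)⟩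
  have hpos : MN d ℓ N v = MN d ℓ N (fun x => max (v x) 0) :=
    le_antisymm (MN_mono fun z => le_max_left _ _) (MN_max_zero_le hN hl_decay hv)
  have hlow := hpos ▸ one_div_mul_iSup_le_MN hN hl_decay fun z => le_max_right (v z) 0
  have hup : MN d ℓ N v ≤ ((⨆ x, max (v x) 0 : ℝ) : EReal) :=
    MN_le_of_forall_le (NeZero.ne N) fun z => (le_max_left _ _).trans (le_ciSup hbdd z)
  have hnonneg : (0 : EReal) ≤ MN d ℓ N v :=
    le_trans (EReal.coe_nonneg.2 (mul_nonneg (by positivity)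
      (Real.iSup_nonneg fun x => le_max_right _ _))) hlow
  exact ⟨iSup_sub_CN_eq_MN v.toBCF, hpos, hlow, hup, hnonneg⟩

/-- the Fenchel conjugate of `C_N` is `M_N`; `M_N(v) = M_N(v₊)`;
and `(1/N) sup v₊ ≤ M_N(v) ≤ sup v₊`. -/
theorem statement_1 (d : ℕ) (hd : 1 ≤ d) (ℓ : ℝ → ℝ≥0∞)
    (hl_lsc : LowerSemicontinuousOn ℓ (Set.Ici 0))
    (hl0 : 0 < ℓ 0)
    (hl_decay : Filter.Tendsto ℓ Filter.atTop (nhds 0))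
    (N : ℕ) (hN : 2 ≤ N)
    (v : C₀(EuclideanSpace ℝ (Fin d), ℝ)) :
    (⨆ ρ : {ρ : Measure (EuclideanSpace ℝ (Fin d)) // IsProbabilityMeasure ρ},
        ((∫ x, v x ∂ρ.1 : ℝ) : EReal) - ((CN d ℓ N ρ.1 : ℝ≥0∞) : EReal))
      = MN d ℓ N (fun x => v x) ∧
    MN d ℓ N (fun x => v x) = MN d ℓ N (fun x => max (v x) 0) ∧
    (((1 / (N : ℝ)) * (⨆ x, max (v x) 0) : ℝ) : EReal) ≤ MN d ℓ N (fun x => v x) ∧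
    MN d ℓ N (fun x => v x) ≤ (((⨆ x, max (v x) 0) : ℝ) : EReal) ∧
    (0 : EReal) ≤ MN d ℓ N (fun x => v x) :=
  statement_1_general d hd ℓ hl_decay N hN v
end
end

section
/- For every v ∈ C_0(ℝ^d) and all integers 2 ≤ K ≤ N one has M_N(v) ≥ (K(K−1))/(N(N−1)) · M_K( ((N−1)/(K−1))·v ). -/
open MeasureTheory ENNReal Filter Topology
open scoped ZeroAtInfty

noncomputable section

/-! Given `y ∈ (ℝ^d)^K`, append `N - K` points that run off to infinity while spreading apart.
Since `v` vanishes at infinity and `ℓ` decays, along such configurations `S_N v` tends to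
`(1/N) ∑ v(y_j)` and `c_N` to `(2/(N(N-1))) ∑_{i<j} ℓ(|y_i - y_j|)`, and this limit is exactly
`K(K-1)/(N(N-1))` times `S_K w(y) - c_K(y)` for `w = ((N-1)/(K-1)) v`. -/

open Bornology

section PairSum

variable {α : Type*} [PseudoMetricSpace α]

def pairSum (ℓ : ℝ → ℝ≥0∞) {n : ℕ} (x : Fin n → α) : ℝ≥0∞ :=
  ∑ i : Fin n, ∑ j : Fin n, if i < j then ℓ (dist (x i) (x j)) else 0

lemma pairSum_append (ℓ : ℝ → ℝ≥0∞) {K M : ℕ} (y : Fin K → α) (z : Fin M → α) :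
    pairSum ℓ (Fin.append y z) =
      pairSum ℓ y + ∑ i, ∑ m, ℓ (dist (y i) (z m)) + pairSum ℓ z := by
  have h₀ (i j : Fin K) : Fin.castAdd M i < Fin.castAdd M j ↔ i < j :=
    (Fin.strictMono_castAdd M).lt_iff_lt
  have h₁ (i : Fin K) (m : Fin M) : Fin.castAdd M i < Fin.natAdd K m := by
    simp only [Fin.lt_def, Fin.val_castAdd, Fin.val_natAdd]; omega
  have h₂ (i : Fin K) (m : Fin M) : ¬ Fin.natAdd K m < Fin.castAdd M i := by
    simp only [Fin.lt_def, Fin.val_natAdd, Fin.val_castAdd, not_lt]; omega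
  simp only [pairSum, Fin.sum_univ_add, Fin.append_left, Fin.append_right, h₁, h₂,
    h₀, Fin.natAdd_lt_natAdd_iff, if_true, if_false,
    Finset.sum_const_zero, add_zero, Finset.sum_add_distrib]
  ring

end PairSum

section Dispersing

variable {α : Type*} [PseudoMetricSpace α] {ι : Type*} {M : ℕ}

def IsDispersing (l : Filter ι) (z : ι → Fin M → α) : Prop :=
  (∀ m, Tendsto (fun t => z t m) l (cobounded α)) ∧
    Pairwise fun m m' => Tendsto (fun t => dist (z t m) (z t m')) l atTop

variable {l : Filter ι} {z : ι → Fin M → α}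

lemma IsDispersing.tendsto_sum_append (hz : IsDispersing l z) {K : ℕ} (y : Fin K → α)
    {G : Type*} [AddCommMonoid G] [TopologicalSpace G] [ContinuousAdd G] {f : α → G}
    (hf : Tendsto f (cobounded α) (𝓝 0)) :
    Tendsto (fun t => ∑ i, f (Fin.append y (z t) i)) l (𝓝 (∑ i, f (y i))) := by
  simp only [Fin.sum_univ_add, Fin.append_left, Fin.append_right]
  simpa using tendsto_const_nhds.add (tendsto_finsetSum _ fun m _ => hf.comp (hz.1 m))

lemma IsDispersing.tendsto_pairSum_append (hz : IsDispersing l z) {K : ℕ} (y : Fin K → α)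
    {ℓ : ℝ → ℝ≥0∞} (hℓ : Tendsto ℓ atTop (𝓝 0)) :
    Tendsto (fun t => pairSum ℓ (Fin.append y (z t))) l (𝓝 (pairSum ℓ y)) := by
  have hcross : Tendsto (fun t => ∑ i, ∑ m, ℓ (dist (y i) (z t m))) l (𝓝 0) := by
    simpa using tendsto_finsetSum _ fun i _ => tendsto_finsetSum _ fun m _ =>
      hℓ.comp ((Metric.tendsto_dist_left_cobounded_atTop (y i)).comp (hz.1 m))
  have hfar : Tendsto (fun t => pairSum ℓ (z t)) l (𝓝 0) := by
    have hterm (m m' : Fin M) :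
        Tendsto (fun t => if m < m' then ℓ (dist (z t m) (z t m')) else 0) l (𝓝 0) := by
      by_cases h : m < m'
      · simp only [h, if_true]; exact hℓ.comp (hz.2 h.ne)
      · simpa only [h, if_false] using tendsto_const_nhds
    simpa [pairSum] using tendsto_finsetSum _ fun m _ => tendsto_finsetSum _ fun m' _ => hterm m m'
  simp only [pairSum_append]
  simpa using (tendsto_const_nhds.add hcross).add hfar

end Dispersing

section Normed

variable {E : Type*} [NormedAddCommGroup E] [NormedSpace ℝ E]

lemma tendsto_norm_mul_smul_atTop {c : ℝ} (hc : c ≠ 0) {e : E} (he : e ≠ 0) :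
    Tendsto (fun t : ℝ => ‖(c * t) • e‖) atTop atTop := by
  simp only [norm_smul, norm_mul, Real.norm_eq_abs]
  exact (tendsto_abs_atTop_atTop.const_mul_atTop (abs_pos.2 hc)).atTop_mul_const
    (norm_pos_iff.2 he)

lemma exists_isDispersing [Nontrivial E] (M : ℕ) :
    ∃ z : ℝ → Fin M → E, IsDispersing atTop z := by
  obtain ⟨e, he⟩ := exists_ne (0 : E)
  refine ⟨fun t m => (((m : ℝ) + 1) * t) • e, fun m => ?_, fun m m' hmm' => ?_⟩
  · exact tendsto_norm_atTop_iff_cobounded.1 (tendsto_norm_mul_smul_atTop (by positivity) he)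
  · have hc : ((m : ℝ) + 1) - ((m' : ℝ) + 1) ≠ 0 := by
      simpa [sub_eq_zero, Fin.val_inj] using hmm'
    simpa only [dist_eq_norm, ← sub_smul, ← sub_mul] using tendsto_norm_mul_smul_atTop hc he

end Normed

section MultiMarginal

variable {d : ℕ} {ℓ : ℝ → ℝ≥0∞}

lemma two_div_mul_sub_one_eq_ofReal {N : ℕ} (hN : 2 ≤ N) :
    2 / ((N : ℝ≥0∞) * ((N : ℝ≥0∞) - 1)) = ENNReal.ofReal (2 / ((N : ℝ) * ((N : ℝ) - 1))) := by
  have hN1 : (0 : ℝ) < (N : ℝ) - 1 := by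
    have : (2 : ℝ) ≤ N := by exact_mod_cast hN
    linarith
  rw [ENNReal.ofReal_div_of_pos (by positivity), ENNReal.ofReal_mul (by positivity),
    ENNReal.ofReal_sub _ zero_le_one]
  simp

lemma le_MN_of_tendsto {N : ℕ} {v : EuclideanSpace ℝ (Fin d) → ℝ} {ι : Type*} {l : Filter ι}
    [l.NeBot] {x : ι → Fin N → EuclideanSpace ℝ (Fin d)} {s : ℝ} {c : ℝ≥0∞}
    (hs : Tendsto (fun t => SN d N v (x t)) l (𝓝 s))
    (hc : Tendsto (fun t => pairCost d ℓ N (x t)) l (𝓝 c)) :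
    (s : EReal) - c ≤ MN d ℓ N v := by
  have hlim : Tendsto (fun t => (SN d N v (x t) : EReal) - pairCost d ℓ N (x t)) l
      (𝓝 ((s : EReal) - c)) := by
    simp only [sub_eq_add_neg]
    exact (EReal.continuousAt_add (by simp) (by simp)).tendsto.comp
      (((continuous_coe_real_ereal.tendsto s).comp hs).prodMk_nhds
        ((continuous_coe_ennreal_ereal.tendsto c).comp hc).neg)
  exact le_of_tendsto' hlim fun t =>
    le_iSup (fun x => (SN d N v x : EReal) - pairCost d ℓ N x) (x t)

lemma le_MN_add (hd : 0 < d) (hℓ : Tendsto ℓ atTop (𝓝 0)) {K M : ℕ} (hN : 2 ≤ K + M)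
    (v : C₀(EuclideanSpace ℝ (Fin d), ℝ)) (y : Fin K → EuclideanSpace ℝ (Fin d)) :
    (((∑ i, v (y i)) / (K + M : ℕ) : ℝ) : EReal) -
        ((2 / (((K + M : ℕ) : ℝ≥0∞) * (((K + M : ℕ) : ℝ≥0∞) - 1)) * pairSum ℓ y : ℝ≥0∞) :
          EReal)
      ≤ MN d ℓ (K + M) (fun x => v x) := by
  have : Nonempty (Fin d) := ⟨⟨0, hd⟩⟩
  obtain ⟨z, hz⟩ := exists_isDispersing (E := EuclideanSpace ℝ (Fin d)) M
  have hv : Tendsto v (cobounded _) (𝓝 0) := by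
    rw [Metric.cobounded_eq_cocompact]; exact zero_at_infty v
  refine le_MN_of_tendsto (x := fun t => Fin.append y (z t))
    ((hz.tendsto_sum_append y hv).div_const _)
    (ENNReal.Tendsto.const_mul (hz.tendsto_pairSum_append y hℓ)
      (Or.inr (two_div_mul_sub_one_eq_ofReal hN ▸ ENNReal.ofReal_ne_top)))

lemma coe_mul_SN_sub_pairCost {K N : ℕ} (hK : 2 ≤ K) (hN : 2 ≤ N)
    (v : EuclideanSpace ℝ (Fin d) → ℝ) (y : Fin K → EuclideanSpace ℝ (Fin d)) :
    ((((K : ℝ) * ((K : ℝ) - 1)) / ((N : ℝ) * ((N : ℝ) - 1)) : ℝ) : EReal) *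
        ((SN d K (fun x => (((N : ℝ) - 1) / ((K : ℝ) - 1)) * v x) y : EReal) -
          pairCost d ℓ K y) =
      (((∑ i, v (y i)) / N : ℝ) : EReal) -
        ((2 / ((N : ℝ≥0∞) * ((N : ℝ≥0∞) - 1)) * pairSum ℓ y : ℝ≥0∞) : EReal) := by
  have hKR : (2 : ℝ) ≤ K := by exact_mod_cast hK
  have hNR : (2 : ℝ) ≤ N := by exact_mod_cast hN
  have hK1 : (K : ℝ) - 1 ≠ 0 := by linarith
  have hN1 : (N : ℝ) - 1 ≠ 0 := by linarith
  have hcoef : (0 : ℝ) ≤ ((K : ℝ) * ((K : ℝ) - 1)) / ((N : ℝ) * ((N : ℝ) - 1)) := by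
    apply div_nonneg <;> apply mul_nonneg <;> linarith
  rw [EReal.mul_sub_of_nonneg_of_ne_top (EReal.coe_nonneg.2 hcoef) (EReal.coe_ne_top _),
    ← EReal.coe_mul]
  congr 2
  · simp only [SN, ← Finset.mul_sum]
    field_simp
  · rw [← max_eq_left hcoef, ← EReal.coe_ennreal_ofReal, ← EReal.coe_ennreal_mul]
    congr 1
    rw [pairCost, ← mul_assoc, two_div_mul_sub_one_eq_ofReal hK, two_div_mul_sub_one_eq_ofReal hN,
      ← ENNReal.ofReal_mul hcoef]
    congr 2
    field_simp

end MultiMarginal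

theorem statement_2_general (d : ℕ) (hd : 1 ≤ d) (ℓ : ℝ → ℝ≥0∞)
    (hl_decay : Filter.Tendsto ℓ Filter.atTop (nhds 0))
    (K N : ℕ) (hK : 2 ≤ K) (hKN : K ≤ N)
    (v : C₀(EuclideanSpace ℝ (Fin d), ℝ)) :
    ((((K : ℝ) * ((K : ℝ) - 1)) / ((N : ℝ) * ((N : ℝ) - 1)) : ℝ) : EReal) *
        MN d ℓ K (fun x => (((N : ℝ) - 1) / ((K : ℝ) - 1)) * v x)
      ≤ MN d ℓ N (fun x => v x) := by
  have hN : 2 ≤ N := hK.trans hKN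
  have hcoef : (0 : EReal) < (((K : ℝ) * ((K : ℝ) - 1)) / ((N : ℝ) * ((N : ℝ) - 1)) : ℝ) := by
    have hKR : (2 : ℝ) ≤ K := by exact_mod_cast hK
    have hNR : (2 : ℝ) ≤ N := by exact_mod_cast hN
    exact EReal.coe_pos.2 (div_pos (by nlinarith) (by nlinarith))
  rw [mul_comm, ← EReal.le_div_iff_mul_le hcoef (EReal.coe_ne_top _)]
  refine iSup_le fun y => ?_
  rw [EReal.le_div_iff_mul_le hcoef (EReal.coe_ne_top _), mul_comm,
    coe_mul_SN_sub_pairCost hK hN]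
  obtain ⟨M, rfl⟩ := Nat.exists_eq_add_of_le hKN
  exact le_MN_add hd hl_decay hN v y

/-- `M_N(v) ≥ (K(K-1))/(N(N-1)) · M_K(((N-1)/(K-1)) v)`. -/
theorem statement_2 (d : ℕ) (hd : 1 ≤ d) (ℓ : ℝ → ℝ≥0∞)
    (hl_lsc : LowerSemicontinuousOn ℓ (Set.Ici 0))
    (hl0 : 0 < ℓ 0)
    (hl_decay : Filter.Tendsto ℓ Filter.atTop (nhds 0))
    (K N : ℕ) (hK : 2 ≤ K) (hKN : K ≤ N)
    (v : C₀(EuclideanSpace ℝ (Fin d), ℝ)) :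
    ((((K : ℝ) * ((K : ℝ) - 1)) / ((N : ℝ) * ((N : ℝ) - 1)) : ℝ) : EReal) *
        MN d ℓ K (fun x => (((N : ℝ) - 1) / ((K : ℝ) - 1)) * v x)
      ≤ MN d ℓ N (fun x => v x) :=
  statement_2_general d hd ℓ hl_decay K N hK hKN v

end
end

section
/- Let L₀ ≥ L₁ ≥ 0 be real numbers. For integers k,l ≥ 0, split the square [k,k+1]×[l,l+1] into the two triangles T⁻_{kl} = {(u,v) ∈ [k,k+1]×[l,l+1] : u+v ≤ k+l+1} and T⁺_{kl} = {(u,v) ∈ [k,k+1]×[l,l+1] : u+v ≥ k+l+1}. Let g : [0,∞)² → ℝ be the unique continuous function which is affine on each triangle T⁻_{kl} and T⁺_{kl} (i.e., on each triangle g is the affine interpolation of its values at the three vertices) and which satisfies g(k,l) = L₀(k²+l²) + 2 L₁ k l for all (k,l) ∈ ℕ². Then g is convex on [0,∞)². -/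
open MeasureTheory ENNReal Filter Topology
open scoped ZeroAtInfty

noncomputable section

/-!
Let `χ` be the piecewise linear interpolant of `t ↦ t²` at the integers; it is convex, being a
supremum of secants. Since `L₀ (k² + l²) + 2 L₁ k l = (L₀ - L₁) (k² + l²) + L₁ (k + l)²`, the
function `G(u, v) = (L₀ - L₁) (χ u + χ v) + L₁ χ (u + v)` is convex for `0 ≤ L₁ ≤ L₀` and takes the
prescribed values on `ℕ²`. On each triangle `T^±_{kl}` the integer parts of `u`, `v` and `u + v`
are constant, so `G` is affine there; as `g` is affine on the same triangle and agrees with `G` at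
its vertices, `g = G`.
-/

/-- The piecewise linear interpolant of `n ↦ n²` on the integer grid, written as the supremum of
the secants of `t ↦ t²` through `n` and `n + 1`. -/
def sqInterp (x : ℝ) : ℝ := ⨆ n : ℕ, ((2 * n + 1) * x - n * (n + 1))

lemma bddAbove_range_sqSecant (x : ℝ) :
    BddAbove (Set.range fun n : ℕ => (2 * (n : ℝ) + 1) * x - n * (n + 1)) := by
  refine ⟨x ^ 2 + 1 / 4, ?_⟩
  rintro _ ⟨n, rfl⟩
  nlinarith [sq_nonneg (x - n - 1 / 2)]

lemma sqSecant_le_sqInterp (x : ℝ) (n : ℕ) : (2 * (n : ℝ) + 1) * x - n * (n + 1) ≤ sqInterp x :=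
  le_ciSup (bddAbove_range_sqSecant x) n

lemma sqInterp_eq_of_mem_Icc {x : ℝ} {n : ℕ} (hx : x ∈ Set.Icc (n : ℝ) (n + 1)) :
    sqInterp x = (2 * (n : ℝ) + 1) * x - n * (n + 1) := by
  obtain ⟨hnx, hxn⟩ := hx
  refine le_antisymm (ciSup_le fun m => ?_) (sqSecant_le_sqInterp x n)
  rcases lt_trichotomy m n with hmn | rfl | hmn
  · have hm : (m : ℝ) + 1 ≤ n := by exact_mod_cast hmn
    nlinarith [mul_nonneg (by linarith : (0 : ℝ) ≤ n - m)
      (by linarith : (0 : ℝ) ≤ 2 * x - n - m - 1)]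
  · exact le_rfl
  · have hm : (n : ℝ) + 1 ≤ m := by exact_mod_cast hmn
    nlinarith [mul_nonneg (by linarith : (0 : ℝ) ≤ m - n)
      (by linarith : (0 : ℝ) ≤ n + m + 1 - 2 * x)]

lemma sqInterp_natCast (n : ℕ) : sqInterp n = (n : ℝ) ^ 2 := by
  rw [sqInterp_eq_of_mem_Icc ⟨le_rfl, by linarith⟩]
  ring

lemma convexOn_sqInterp : ConvexOn ℝ Set.univ sqInterp := by
  refine ⟨convex_univ, fun x _ y _ a b ha hb hab => ciSup_le fun n => ?_⟩
  have hx := mul_le_mul_of_nonneg_left (sqSecant_le_sqInterp x n) ha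
  have hy := mul_le_mul_of_nonneg_left (sqSecant_le_sqInterp y n) hb
  simp only [smul_eq_mul]
  linear_combination hx + hy + (n * (n + 1) : ℝ) * hab

section Interpolant

variable (L0 L1 : ℝ)

def gridInterp (p : ℝ × ℝ) : ℝ :=
  (L0 - L1) * (sqInterp p.1 + sqInterp p.2) + L1 * sqInterp (p.1 + p.2)

lemma gridInterp_natCast (k l : ℕ) :
    gridInterp L0 L1 (k, l) = L0 * ((k : ℝ) ^ 2 + (l : ℝ) ^ 2) + 2 * L1 * k * l := by
  simp only [gridInterp, sqInterp_natCast, ← Nat.cast_add]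
  push_cast
  ring

lemma exists_affine_gridInterp (k l m : ℕ) : ∃ a b c : ℝ, ∀ p : ℝ × ℝ,
    p.1 ∈ Set.Icc (k : ℝ) (k + 1) → p.2 ∈ Set.Icc (l : ℝ) (l + 1) →
      p.1 + p.2 ∈ Set.Icc (m : ℝ) (m + 1) → gridInterp L0 L1 p = a * p.1 + b * p.2 + c := by
  refine ⟨(L0 - L1) * (2 * k + 1) + L1 * (2 * m + 1), (L0 - L1) * (2 * l + 1) + L1 * (2 * m + 1),
    -((L0 - L1) * (k * (k + 1) + l * (l + 1)) + L1 * (m * (m + 1))), fun p h1 h2 h12 => ?_⟩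
  rw [gridInterp, sqInterp_eq_of_mem_Icc h1, sqInterp_eq_of_mem_Icc h2, sqInterp_eq_of_mem_Icc h12]
  ring

variable {L0 L1}

lemma convexOn_gridInterp (hL1 : 0 ≤ L1) (hL01 : L1 ≤ L0) :
    ConvexOn ℝ Set.univ (gridInterp L0 L1) := by
  have hfst := convexOn_sqInterp.comp_linearMap (LinearMap.fst ℝ ℝ ℝ)
  have hsnd := convexOn_sqInterp.comp_linearMap (LinearMap.snd ℝ ℝ ℝ)
  have hsum := convexOn_sqInterp.comp_linearMap (LinearMap.fst ℝ ℝ ℝ + LinearMap.snd ℝ ℝ ℝ)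
  exact ((hfst.add hsnd).smul (sub_nonneg.2 hL01)).add (hsum.smul hL1)

end Interpolant

def lowerTri (k l : ℕ) : Set (ℝ × ℝ) :=
  {p | (k : ℝ) ≤ p.1 ∧ p.1 ≤ k + 1 ∧ (l : ℝ) ≤ p.2 ∧ p.2 ≤ l + 1 ∧ p.1 + p.2 ≤ k + l + 1}

def upperTri (k l : ℕ) : Set (ℝ × ℝ) :=
  {p | (k : ℝ) ≤ p.1 ∧ p.1 ≤ k + 1 ∧ (l : ℝ) ≤ p.2 ∧ p.2 ≤ l + 1 ∧ (k : ℝ) + l + 1 ≤ p.1 + p.2}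

lemma exists_mem_lowerTri_or_upperTri {p : ℝ × ℝ} (hp : p ∈ Set.Ici (0 : ℝ) ×ˢ Set.Ici (0 : ℝ)) :
    ∃ k l : ℕ, p ∈ lowerTri k l ∨ p ∈ upperTri k l := by
  obtain ⟨h1, h2⟩ := Set.mem_prod.1 hp
  rw [Set.mem_Ici] at h1 h2
  refine ⟨⌊p.1⌋₊, ⌊p.2⌋₊, ?_⟩
  have := Nat.floor_le h1; have := Nat.lt_floor_add_one p.1
  have := Nat.floor_le h2; have := Nat.lt_floor_add_one p.2
  rcases le_total (p.1 + p.2) (⌊p.1⌋₊ + ⌊p.2⌋₊ + 1) with h | h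
  · exact .inl ⟨by linarith, by linarith, by linarith, by linarith, h⟩
  · exact .inr ⟨by linarith, by linarith, by linarith, by linarith, h⟩

lemma eqOn_of_affine_of_eq_at_corners {T : Set (ℝ × ℝ)} {f f' : ℝ × ℝ → ℝ}
    {a b c a' b' c' x y x' y' : ℝ} (hx : x' ≠ x) (hy : y' ≠ y)
    (hf : ∀ p ∈ T, f p = a * p.1 + b * p.2 + c) (hf' : ∀ p ∈ T, f' p = a' * p.1 + b' * p.2 + c')
    (h0 : (x, y) ∈ T) (h1 : (x', y) ∈ T) (h2 : (x, y') ∈ T)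
    (e0 : f (x, y) = f' (x, y)) (e1 : f (x', y) = f' (x', y)) (e2 : f (x, y') = f' (x, y')) :
    Set.EqOn f f' T := by
  rw [hf _ h0, hf' _ h0] at e0
  rw [hf _ h1, hf' _ h1] at e1
  rw [hf _ h2, hf' _ h2] at e2
  have ha : a = a' := mul_right_cancel₀ (sub_ne_zero.2 hx) (by linear_combination e1 - e0)
  have hb : b = b' := mul_right_cancel₀ (sub_ne_zero.2 hy) (by linear_combination e2 - e0)
  subst ha hb
  intro p hp
  rw [hf p hp, hf' p hp]
  linear_combination e0

section Triangles

variable {L0 L1 : ℝ} {g : ℝ × ℝ → ℝ} {k l : ℕ} {a b c : ℝ}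

lemma eqOn_gridInterp_lowerTri (hgrid : ∀ k l : ℕ, g (k, l) = gridInterp L0 L1 (k, l))
    (hg : ∀ p ∈ lowerTri k l, g p = a * p.1 + b * p.2 + c) :
    Set.EqOn g (gridInterp L0 L1) (lowerTri k l) := by
  obtain ⟨a', b', c', hI⟩ := exists_affine_gridInterp L0 L1 k l (k + l)
  refine eqOn_of_affine_of_eq_at_corners (x' := (k : ℝ) + 1) (y' := (l : ℝ) + 1)
    (by simp) (by simp) hg (fun p ⟨h1, h1', h2, h2', h12⟩ => hI p ⟨h1, h1'⟩ ⟨h2, h2'⟩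
      ⟨by push_cast; linarith, by push_cast; linarith⟩)
    ?_ ?_ ?_ (hgrid k l) (mod_cast hgrid (k + 1) l) (mod_cast hgrid k (l + 1)) <;>
  simp only [lowerTri, Set.mem_ofPred_eq] <;> refine ⟨?_, ?_, ?_, ?_, ?_⟩ <;> linarith

lemma eqOn_gridInterp_upperTri (hgrid : ∀ k l : ℕ, g (k, l) = gridInterp L0 L1 (k, l))
    (hg : ∀ p ∈ upperTri k l, g p = a * p.1 + b * p.2 + c) :
    Set.EqOn g (gridInterp L0 L1) (upperTri k l) := by
  obtain ⟨a', b', c', hI⟩ := exists_affine_gridInterp L0 L1 k l (k + l + 1)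
  refine eqOn_of_affine_of_eq_at_corners (x := (k : ℝ) + 1) (y := (l : ℝ) + 1) (x' := k)
    (y' := l)
    (by simp) (by simp) hg (fun p ⟨h1, h1', h2, h2', h12⟩ => hI p ⟨h1, h1'⟩ ⟨h2, h2'⟩
      ⟨by push_cast; linarith, by push_cast; linarith⟩)
    ?_ ?_ ?_ (mod_cast hgrid (k + 1) (l + 1)) (mod_cast hgrid k (l + 1))
    (mod_cast hgrid (k + 1) l) <;>
  simp only [upperTri, Set.mem_ofPred_eq] <;> refine ⟨?_, ?_, ?_, ?_, ?_⟩ <;> linarith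

end Triangles

theorem statement_4_general (L0 L1 : ℝ) (hL1 : 0 ≤ L1) (hL01 : L1 ≤ L0)
    (g : ℝ × ℝ → ℝ)
    (hval : ∀ k l : ℕ,
      g ((k : ℝ), (l : ℝ)) = L0 * ((k : ℝ) ^ 2 + (l : ℝ) ^ 2) + 2 * L1 * (k : ℝ) * (l : ℝ))
    (haffminus : ∀ k l : ℕ, ∃ a b c : ℝ, ∀ p : ℝ × ℝ,
      (k : ℝ) ≤ p.1 → p.1 ≤ (k : ℝ) + 1 → (l : ℝ) ≤ p.2 → p.2 ≤ (l : ℝ) + 1 →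
      p.1 + p.2 ≤ (k : ℝ) + (l : ℝ) + 1 → g p = a * p.1 + b * p.2 + c)
    (haffplus : ∀ k l : ℕ, ∃ a b c : ℝ, ∀ p : ℝ × ℝ,
      (k : ℝ) ≤ p.1 → p.1 ≤ (k : ℝ) + 1 → (l : ℝ) ≤ p.2 → p.2 ≤ (l : ℝ) + 1 →
      (k : ℝ) + (l : ℝ) + 1 ≤ p.1 + p.2 → g p = a * p.1 + b * p.2 + c) :
    ConvexOn ℝ (Set.Ici (0 : ℝ) ×ˢ Set.Ici (0 : ℝ)) g := by
  have hgrid : ∀ k l : ℕ, g (k, l) = gridInterp L0 L1 (k, l) := fun k l => by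
    rw [hval, gridInterp_natCast]
  have heq : Set.EqOn (gridInterp L0 L1) g (Set.Ici 0 ×ˢ Set.Ici 0) := by
    intro p hp
    obtain ⟨k, l, hlow | hup⟩ := exists_mem_lowerTri_or_upperTri hp
    · obtain ⟨a, b, c, hg⟩ := haffminus k l
      exact (eqOn_gridInterp_lowerTri hgrid (fun q ⟨h1, h1', h2, h2', h12⟩ =>
        hg q h1 h1' h2 h2' h12) hlow).symm
    · obtain ⟨a, b, c, hg⟩ := haffplus k l
      exact (eqOn_gridInterp_upperTri hgrid (fun q ⟨h1, h1', h2, h2', h12⟩ =>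
        hg q h1 h1' h2 h2' h12) hup).symm
  exact ((convexOn_gridInterp hL1 hL01).subset (Set.subset_univ _)
    ((convex_Ici 0).prod (convex_Ici 0))).congr heq

/-- convexity of the piecewise affine interpolant of
`(k,l) ↦ L₀(k²+l²) + 2L₁kl` along the standard triangulation of `[0,∞)²`. -/
theorem statement_4 (L0 L1 : ℝ) (hL1 : 0 ≤ L1) (hL01 : L1 ≤ L0)
    (g : ℝ × ℝ → ℝ)
    (hcont : ContinuousOn g (Set.Ici (0 : ℝ) ×ˢ Set.Ici (0 : ℝ)))
    (hval : ∀ k l : ℕ,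
      g ((k : ℝ), (l : ℝ)) = L0 * ((k : ℝ) ^ 2 + (l : ℝ) ^ 2) + 2 * L1 * (k : ℝ) * (l : ℝ))
    (haffminus : ∀ k l : ℕ, ∃ a b c : ℝ, ∀ p : ℝ × ℝ,
      (k : ℝ) ≤ p.1 → p.1 ≤ (k : ℝ) + 1 → (l : ℝ) ≤ p.2 → p.2 ≤ (l : ℝ) + 1 →
      p.1 + p.2 ≤ (k : ℝ) + (l : ℝ) + 1 → g p = a * p.1 + b * p.2 + c)
    (haffplus : ∀ k l : ℕ, ∃ a b c : ℝ, ∀ p : ℝ × ℝ,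
      (k : ℝ) ≤ p.1 → p.1 ≤ (k : ℝ) + 1 → (l : ℝ) ≤ p.2 → p.2 ≤ (l : ℝ) + 1 →
      (k : ℝ) + (l : ℝ) + 1 ≤ p.1 + p.2 → g p = a * p.1 + b * p.2 + c) :
    ConvexOn ℝ (Set.Ici (0 : ℝ) ×ˢ Set.Ici (0 : ℝ)) g :=
  statement_4_general L0 L1 hL1 hL01 g hval haffminus haffplus
end
end

section
/- Assume in addition that ℓ(r) > 0 for every r ∈ [0,∞). Then for every v ∈ C_0(ℝ^d), lim_{t→0⁺} M_∞(t v)/t = 0. -/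
open MeasureTheory ENNReal Filter Topology
open scoped ZeroAtInfty

noncomputable section

/-!
Lower bound: placing the `N` points on a ray, far from the origin and from each other, gives
`S_N(tv) ≥ -tε/2` while every interaction, hence `c_N`, is below `tε/2`.

Upper bound: let `|v| ≤ ε/2` outside the ball `B_R` and `ℓ ≥ c > 0` on `[0, 2R]` (a positive lower
semicontinuous function has a positive minimum on a compact set). If `k` of the `N` points lie in
`B_R`, then `S_N(tv) ≤ t‖v‖ p + tε/2` with `p = k/N`, and the `k(k-1)` ordered pairs inside `B_R`
give `c_N ≥ c p² - c/N`. Completing the square in `p`,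
`M_N(tv) ≤ tε/2 + t²‖v‖²/(4c) + c/N`, which is at most `εt` once `t‖v‖² ≤ cε` and `N ≥ 4c/(tε)`.
-/

open Finset

theorem Finset.sum_offDiag_eq_two_nsmul_sum_lt {ι M : Type*} [Fintype ι] [LinearOrder ι]
    [AddCommMonoid M] (f : ι → ι → M) (hf : ∀ i j, f i j = f j i) :
    ∑ p ∈ (univ : Finset ι).offDiag, f p.1 p.2 = 2 • ∑ i, ∑ j, if i < j then f i j else 0 := by
  have hne : ∀ i j, (if i ≠ j then f i j else 0) =
      (if i < j then f i j else 0) + (if j < i then f j i else 0) := by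
    intro i j
    rcases lt_trichotomy i j with h | rfl | h
    · simp [h, h.ne, h.not_gt]
    · simp
    · simp [h, h.ne', h.not_gt, hf i j]
  have hoff : (univ : Finset ι).offDiag = (univ ×ˢ univ).filter fun p => p.1 ≠ p.2 := by
    ext; simp
  rw [hoff, Finset.sum_filter, Finset.sum_product]
  simp_rw [hne, Finset.sum_add_distrib]
  rw [Finset.sum_comm (f := fun i j => if j < i then f j i else 0), two_nsmul]

theorem ZeroAtInftyContinuousMap.exists_forall_norm_lt {E F : Type*} [NormedAddCommGroup E]
    [ProperSpace E] [NormedAddCommGroup F] (v : C₀(E, F)) {ε : ℝ} (hε : 0 < ε) :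
    ∃ R, ∀ z, R < ‖z‖ → ‖v z‖ < ε := by
  have h := v.zero_at_infty'.eventually (eventually_norm_sub_lt (0 : F) hε)
  rw [← Metric.cobounded_eq_cocompact, ← comap_norm_atTop, eventually_comap,
    eventually_atTop] at h
  obtain ⟨R, hR⟩ := h
  exact ⟨R, fun z hz => by simpa using hR _ hz.le z rfl⟩

theorem ZeroAtInftyContinuousMap.norm_apply_le {E F : Type*} [TopologicalSpace E]
    [NormedAddCommGroup F] (v : C₀(E, F)) (z : E) : ‖v z‖ ≤ ‖v‖ := by
  simpa using v.toBCF.norm_coe_le_norm z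

theorem IsCompact.exists_ofReal_le_of_pos {α : Type*} [TopologicalSpace α] {f : α → ℝ≥0∞}
    {s : Set α} (hs : IsCompact s) (hf : LowerSemicontinuousOn f s) (hpos : ∀ x ∈ s, 0 < f x) :
    ∃ c : ℝ, 0 < c ∧ ∀ x ∈ s, ENNReal.ofReal c ≤ f x := by
  rcases s.eq_empty_or_nonempty with rfl | hne
  · exact ⟨1, one_pos, by simp⟩
  obtain ⟨a, ha, hmin⟩ := hf.exists_isMinOn hne hs
  obtain ⟨c, -, hc, hca⟩ := ENNReal.lt_iff_exists_real_btwn.1 (hpos a ha)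
  exact ⟨c, ENNReal.ofReal_pos.1 hc, fun x hx => hca.le.trans (hmin hx)⟩

theorem exists_pairwise_le_dist_of_lt_norm {E : Type*} [NormedAddCommGroup E]
    [NormedSpace ℝ E] [Nontrivial E] (N : ℕ) (R ρ : ℝ) :
    ∃ x : Fin N → E, (∀ i, R < ‖x i‖) ∧ ∀ i j, i ≠ j → ρ ≤ dist (x i) (x j) := by
  obtain ⟨e, he⟩ := exists_norm_eq E zero_le_one
  set a := |R| + |ρ| + 1
  have ha : 0 < a := by positivity
  refine ⟨fun i => ((((i : ℕ) : ℝ) + 1) * a) • e, fun i => ?_, fun i j hij => ?_⟩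
  · rw [norm_smul, he, mul_one, Real.norm_of_nonneg (by positivity)]
    nlinarith [le_abs_self R, abs_nonneg ρ, (Nat.cast_nonneg (i : ℕ) : (0 : ℝ) ≤ (i : ℕ))]
  · have hij' : 1 ≤ |((i : ℕ) : ℝ) - (j : ℕ)| := by
      have : ((i : ℕ) : ℤ) - (j : ℕ) ≠ 0 := sub_ne_zero.2 (by exact_mod_cast Fin.val_ne_of_ne hij)
      exact_mod_cast Int.one_le_abs this
    rw [dist_eq_norm, ← sub_smul, norm_smul, he, mul_one, ← sub_mul, add_sub_add_right_eq_sub,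
      Real.norm_eq_abs, abs_mul, abs_of_pos ha]
    nlinarith [le_abs_self ρ, abs_nonneg R]

theorem Finset.card_offDiag_eq_mul_sub_one {α : Type*} (s : Finset α) :
    #s.offDiag = #s * (#s - 1) := by
  rw [Finset.offDiag_card, Nat.mul_sub_one]

section PairCost

variable {d : ℕ} {ℓ : ℝ → ℝ≥0∞} {N : ℕ} {x : Fin N → EuclideanSpace ℝ (Fin d)}

theorem pairCost_eq_sum_offDiag :
    pairCost d ℓ N x =
      (∑ p ∈ (univ : Finset (Fin N)).offDiag, ℓ (dist (x p.1) (x p.2))) / (N * (N - 1) : ℕ) := by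
  rw [Finset.sum_offDiag_eq_two_nsmul_sum_lt (fun i j => ℓ (dist (x i) (x j)))
    fun i j => by rw [dist_comm], pairCost,
    Nat.cast_mul, ENNReal.natCast_sub, Nat.cast_one, nsmul_eq_mul, Nat.cast_ofNat,
    ENNReal.div_eq_inv_mul, ENNReal.div_eq_inv_mul, mul_assoc]

theorem pairCost_le (hN : 2 ≤ N) {b : ℝ≥0∞}
    (hb : ∀ i j, i ≠ j → ℓ (dist (x i) (x j)) ≤ b) : pairCost d ℓ N x ≤ b := by
  have hpos : ((N * (N - 1) : ℕ) : ℝ≥0∞) ≠ 0 := by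
    simp only [ne_eq, Nat.cast_eq_zero, mul_eq_zero, not_or]; omega
  rw [pairCost_eq_sum_offDiag, ENNReal.div_le_iff hpos (ENNReal.natCast_ne_top _), mul_comm]
  calc ∑ p ∈ (univ : Finset (Fin N)).offDiag, ℓ (dist (x p.1) (x p.2))
      ≤ #(univ : Finset (Fin N)).offDiag • b :=
        Finset.sum_le_card_nsmul _ _ _ fun p hp => hb _ _ (Finset.mem_offDiag.1 hp).2.2
    _ = ((N * (N - 1) : ℕ) : ℝ≥0∞) * b := by
        rw [Finset.card_offDiag_eq_mul_sub_one, nsmul_eq_mul, card_univ, Fintype.card_fin]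

theorem le_pairCost (S : Finset (Fin N)) {b : ℝ≥0∞}
    (hb : ∀ i ∈ S, ∀ j ∈ S, i ≠ j → b ≤ ℓ (dist (x i) (x j))) :
    ((#S * (#S - 1) : ℕ) : ℝ≥0∞) * b / (N * (N - 1) : ℕ) ≤ pairCost d ℓ N x := by
  rw [pairCost_eq_sum_offDiag]
  gcongr
  calc ((#S * (#S - 1) : ℕ) : ℝ≥0∞) * b = #S.offDiag • b := by
        rw [Finset.card_offDiag_eq_mul_sub_one, nsmul_eq_mul]
    _ ≤ ∑ p ∈ S.offDiag, ℓ (dist (x p.1) (x p.2)) := by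
        refine Finset.card_nsmul_le_sum _ _ _ fun p hp => ?_
        obtain ⟨hi, hj, hij⟩ := Finset.mem_offDiag.1 hp
        exact hb _ hi _ hj hij
    _ ≤ ∑ p ∈ (univ : Finset (Fin N)).offDiag, ℓ (dist (x p.1) (x p.2)) :=
        Finset.sum_le_sum_of_subset (Finset.offDiag_mono (Finset.subset_univ S))

end PairCost

theorem EReal.coe_sub_le_coe_sub_coe_ennreal {a b : ℝ} {p : ℝ≥0∞} (hb : 0 ≤ b)
    (hp : p ≤ ENNReal.ofReal b) : ((a - b : ℝ) : EReal) ≤ (a : EReal) - p := by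
  rw [EReal.coe_sub]
  refine EReal.sub_le_sub le_rfl ?_
  simpa [EReal.coe_ennreal_ofReal, hb] using EReal.coe_ennreal_le_coe_ennreal_iff.2 hp

theorem EReal.coe_sub_coe_ennreal_le {a b : ℝ} {p : ℝ≥0∞} (hp : ENNReal.ofReal b ≤ p) :
    (a : EReal) - p ≤ ((a - b : ℝ) : EReal) := by
  rw [EReal.coe_sub]
  refine EReal.sub_le_sub le_rfl ?_
  calc (b : EReal) ≤ ((max b 0 : ℝ) : EReal) := EReal.coe_le_coe_iff.2 (le_max_left _ _)
    _ = ((ENNReal.ofReal b : ℝ≥0∞) : EReal) := (EReal.coe_ennreal_ofReal).symm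
    _ ≤ p := EReal.coe_ennreal_le_coe_ennreal_iff.2 hp

theorem Nat.cast_mul_sub_one_self {R : Type*} [CommRing R] (k : ℕ) :
    ((k * (k - 1) : ℕ) : R) = (k : R) ^ 2 - k := by
  rcases k with _ | k
  · simp
  · push_cast; ring

theorem mul_div_sub_mul_div_pairs_le (A : ℝ) {c : ℝ} (hc : 0 < c) {k N : ℕ} (hk : k ≤ N)
    (hN : 2 ≤ N) :
    A * k / N - c * (k * (k - 1) : ℕ) / (N * (N - 1) : ℕ) ≤ A ^ 2 / (4 * c) + c / N := by
  have hN0 : (0 : ℝ) < N := by positivity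
  have hN1 : (0 : ℝ) < (N * (N - 1) : ℕ) := by
    have h2 : (2 : ℝ) ≤ N := by exact_mod_cast hN
    have : (1 : ℝ) ≤ N - 1 := by linarith
    rw [Nat.cast_mul_sub_one_self]; nlinarith
  have hkN : (k : ℝ) ≤ N := by exact_mod_cast hk
  set p : ℝ := k / N
  have hp : 0 ≤ p ∧ p ≤ 1 := ⟨by positivity, div_le_one_of_le₀ hkN hN0.le⟩
  have hpairs : p ^ 2 - 1 / N ≤ ((k * (k - 1) : ℕ) : ℝ) / (N * (N - 1) : ℕ) := by
    calc p ^ 2 - 1 / N ≤ p ^ 2 - p / N := by gcongr; exact hp.2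
      _ = ((k * (k - 1) : ℕ) : ℝ) / (N : ℝ) ^ 2 := by
          rw [Nat.cast_mul_sub_one_self]; simp only [p]; field_simp
      _ ≤ ((k * (k - 1) : ℕ) : ℝ) / (N * (N - 1) : ℕ) := by
          gcongr
          rw [Nat.cast_mul_sub_one_self]; linarith
  have hamgm : A * p - c * p ^ 2 ≤ A ^ 2 / (4 * c) := by
    rw [le_div_iff₀ (by positivity)]; nlinarith [sq_nonneg (2 * c * p - A)]
  calc A * k / N - c * (k * (k - 1) : ℕ) / (N * (N - 1) : ℕ)
      = A * p - c * (((k * (k - 1) : ℕ) : ℝ) / (N * (N - 1) : ℕ)) := by ring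
    _ ≤ A * p - c * (p ^ 2 - 1 / N) := by gcongr
    _ ≤ A ^ 2 / (4 * c) + c / N := by rw [mul_sub, mul_one_div]; linarith

section Dual

variable {d : ℕ} {ℓ : ℝ → ℝ≥0∞} {N : ℕ} {w : EuclideanSpace ℝ (Fin d) → ℝ}

theorem le_SN (hN : 0 < N) {x : Fin N → EuclideanSpace ℝ (Fin d)} {a : ℝ}
    (h : ∀ i, a ≤ w (x i)) : a ≤ SN d N w x := by
  rw [SN, le_div_iff₀ (by positivity), mul_comm]
  simpa using Finset.card_nsmul_le_sum univ (fun i => w (x i)) a fun i _ => h i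

theorem SN_le_of_far_le (hN : 0 < N) (x : Fin N → EuclideanSpace ℝ (Fin d)) {A B R : ℝ}
    (hB : 0 ≤ B) (hwA : ∀ z, w z ≤ A) (hwB : ∀ z, R < ‖z‖ → w z ≤ B) :
    SN d N w x ≤ A * #{i | ‖x i‖ ≤ R} / N + B := by
  have hnear : ∑ i with ‖x i‖ ≤ R, w (x i) ≤ #{i | ‖x i‖ ≤ R} * A := by
    simpa using Finset.sum_le_card_nsmul _ _ A fun i _ => hwA (x i)
  have hfar : ∑ i with ¬‖x i‖ ≤ R, w (x i) ≤ N * B := by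
    calc ∑ i with ¬‖x i‖ ≤ R, w (x i) ≤ #{i | ¬‖x i‖ ≤ R} * B := by
          simpa using Finset.sum_le_card_nsmul _ _ B fun i hi =>
            hwB _ (not_le.1 (Finset.mem_filter.1 hi).2)
      _ ≤ N * B := by
          gcongr
          simpa using Finset.card_filter_le (univ : Finset (Fin N)) _
  rw [SN, ← Finset.sum_filter_add_sum_filter_not _ fun i => ‖x i‖ ≤ R,
    div_add' _ _ _ (by positivity), div_le_div_iff_of_pos_right (by positivity)]
  linarith

theorem MN_le_of_far_le (hN : 2 ≤ N) {A B R c : ℝ} (hB : 0 ≤ B) (hc : 0 < c)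
    (hwA : ∀ z, w z ≤ A) (hwB : ∀ z, R < ‖z‖ → w z ≤ B)
    (hℓ : ∀ r ∈ Set.Icc 0 (2 * R), ENNReal.ofReal c ≤ ℓ r) :
    MN d ℓ N w ≤ ((B + A ^ 2 / (4 * c) + c / N : ℝ) : EReal) := by
  refine iSup_le fun x => ?_
  set S : Finset (Fin N) := {i | ‖x i‖ ≤ R}
  have hpairs : (0 : ℝ) < (N * (N - 1) : ℕ) := by
    have : 0 < N * (N - 1) := Nat.mul_pos (by omega) (by omega)
    exact_mod_cast this
  have hcost :
      ENNReal.ofReal (c * (#S * (#S - 1) : ℕ) / (N * (N - 1) : ℕ)) ≤ pairCost d ℓ N x := by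
    refine le_of_eq_of_le ?_ (le_pairCost S fun i hi j hj _ => hℓ _ ⟨dist_nonneg, ?_⟩)
    · rw [ENNReal.ofReal_div_of_pos hpairs, ENNReal.ofReal_mul hc.le, ENNReal.ofReal_natCast,
        ENNReal.ofReal_natCast, mul_comm]
    · have hi' := (Finset.mem_filter.1 hi).2
      have hj' := (Finset.mem_filter.1 hj).2
      linarith [dist_le_norm_add_norm (x i) (x j)]
  calc ((SN d N w x : ℝ) : EReal) - (pairCost d ℓ N x : EReal)
      ≤ ((SN d N w x - c * (#S * (#S - 1) : ℕ) / (N * (N - 1) : ℕ) : ℝ) : EReal) :=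
        EReal.coe_sub_coe_ennreal_le hcost
    _ ≤ ((B + A ^ 2 / (4 * c) + c / N : ℝ) : EReal) := by
        refine EReal.coe_le_coe_iff.2 ?_
        have hSN : #S ≤ N := (Finset.card_le_univ S).trans_eq (Fintype.card_fin N)
        linarith [SN_le_of_far_le (by omega) x hB hwA hwB,
          mul_div_sub_mul_div_pairs_le A hc hSN hN]

theorem le_Minf_of_far_le (hd : 1 ≤ d) (hℓ : Tendsto ℓ atTop (𝓝 0)) {a R η : ℝ} (hη : 0 < η)
    (hw : ∀ z, R < ‖z‖ → a ≤ w z) : ((a - η : ℝ) : EReal) ≤ Minf d ℓ w := by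
  have : Nonempty (Fin d) := ⟨⟨0, hd⟩⟩
  obtain ⟨ρ, hρ⟩ := eventually_atTop.1 (hℓ.eventually (ge_mem_nhds (ENNReal.ofReal_pos.2 hη)))
  refine le_iInf₂ fun N hN => ?_
  obtain ⟨x, hxR, hxρ⟩ :=
    exists_pairwise_le_dist_of_lt_norm (E := EuclideanSpace ℝ (Fin d)) N R ρ
  calc ((a - η : ℝ) : EReal) ≤ ((SN d N w x : ℝ) : EReal) - (pairCost d ℓ N x : EReal) := by
        refine (EReal.coe_le_coe_iff.2 (sub_le_sub_right ?_ η)).trans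
          (EReal.coe_sub_le_coe_sub_coe_ennreal hη.le
            (pairCost_le hN fun i j hij => hρ _ (hxρ i j hij)))
        exact le_SN (by omega) fun i => hw _ (hxR i)
    _ ≤ MN d ℓ N w :=
        le_iSup (fun x => ((SN d N w x : ℝ) : EReal) - (pairCost d ℓ N x : EReal)) x

end Dual

theorem statement_7_general (d : ℕ) (hd : 1 ≤ d) (ℓ : ℝ → ℝ≥0∞)
    (hl_lsc : LowerSemicontinuousOn ℓ (Set.Ici 0))
    (hl_decay : Filter.Tendsto ℓ Filter.atTop (nhds 0))
    (hlpos : ∀ r : ℝ, 0 ≤ r → 0 < ℓ r)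
    (v : C₀(EuclideanSpace ℝ (Fin d), ℝ)) :
    ∀ ε : ℝ, 0 < ε → ∃ δ : ℝ, 0 < δ ∧ ∀ t : ℝ, 0 < t → t ≤ δ →
      ((-(ε * t) : ℝ) : EReal) ≤ Minf d ℓ (fun x => t * v x) ∧
      Minf d ℓ (fun x => t * v x) ≤ ((ε * t : ℝ) : EReal) := by
  intro ε hε
  obtain ⟨R, hR⟩ := v.exists_forall_norm_lt (half_pos hε)
  obtain ⟨c, hc, hcℓ⟩ := (isCompact_Icc (a := 0) (b := 2 * R)).exists_ofReal_le_of_pos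
    (hl_lsc.mono Set.Icc_subset_Ici_self) fun r hr => hlpos r hr.1
  refine ⟨c * ε / (‖v‖ ^ 2 + 1), by positivity, fun t ht htδ => ⟨?_, ?_⟩⟩
  · have hfar : ∀ z, R < ‖z‖ → -(t * (ε / 2)) ≤ t * v z := fun z hz =>
      neg_mul_eq_mul_neg t _ ▸ mul_le_mul_of_nonneg_left (abs_le.1 (hR z hz).le).1 ht.le
    convert le_Minf_of_far_le hd hl_decay (by positivity : 0 < t * (ε / 2)) hfar using 2
    ring
  · obtain ⟨N, hN⟩ := exists_nat_ge (max 2 (4 * c / (t * ε)))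
    have hN2 : 2 ≤ N := by exact_mod_cast (le_max_left _ _).trans hN
    have hwA : ∀ z, t * v z ≤ t * ‖v‖ := fun z =>
      mul_le_mul_of_nonneg_left ((le_abs_self _).trans (v.norm_apply_le z)) ht.le
    have hwB : ∀ z, R < ‖z‖ → t * v z ≤ t * (ε / 2) := fun z hz =>
      mul_le_mul_of_nonneg_left ((le_abs_self _).trans (hR z hz).le) ht.le
    have hquad : (t * ‖v‖) ^ 2 / (4 * c) ≤ ε * t / 4 := by
      rw [div_le_iff₀ (by positivity)]
      rw [le_div_iff₀ (by positivity)] at htδ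
      nlinarith [sq_nonneg ‖v‖]
    have hcN : c / N ≤ ε * t / 4 := by
      have := (div_le_iff₀ (by positivity)).1 ((le_max_right _ _).trans hN)
      rw [div_le_iff₀ (by positivity)]
      linarith
    calc Minf d ℓ (fun x => t * v x) ≤ MN d ℓ N (fun x => t * v x) := iInf₂_le N hN2
      _ ≤ ((t * (ε / 2) + (t * ‖v‖) ^ 2 / (4 * c) + c / N : ℝ) : EReal) :=
        MN_le_of_far_le hN2 (by positivity) hc hwA hwB hcℓ
      _ ≤ ((ε * t : ℝ) : EReal) := EReal.coe_le_coe_iff.2 (by linarith)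

/-- if `ℓ > 0` everywhere, then `M_∞(tv)/t → 0` as `t → 0⁺`. -/
theorem statement_7 (d : ℕ) (hd : 1 ≤ d) (ℓ : ℝ → ℝ≥0∞)
    (hl_lsc : LowerSemicontinuousOn ℓ (Set.Ici 0))
    (hl0 : 0 < ℓ 0)
    (hl_decay : Filter.Tendsto ℓ Filter.atTop (nhds 0))
    (hlpos : ∀ r : ℝ, 0 ≤ r → 0 < ℓ r)
    (v : C₀(EuclideanSpace ℝ (Fin d), ℝ)) :
    ∀ ε : ℝ, 0 < ε → ∃ δ : ℝ, 0 < δ ∧ ∀ t : ℝ, 0 < t → t ≤ δ →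
      ((-(ε * t) : ℝ) : EReal) ≤ Minf d ℓ (fun x => t * v x) ∧
      Minf d ℓ (fun x => t * v x) ≤ ((ε * t : ℝ) : EReal) :=
  statement_7_general d hd ℓ hl_lsc hl_decay hlpos v
end
end

section
/- Let λ ≥ 0 and v ∈ C_0(ℝ^d) with v ≥ 0. Suppose ρ ∈ P_-(ℝ^d) minimizes μ ↦ D₂(μ) − λ ∫ v dμ over P_-(ℝ^d). Then there exists a real constant c such that: (a) c ≤ 0, and c = 0 whenever ρ(ℝ^d) < 1; (b) u_ρ(x) − (λ/2) v(x) = c for ρ-almost every x; (c) u_ρ(x) − (λ/2) v(x) ≥ c for ν-almost every x, for every ν ∈ P_-(ℝ^d) with D₂(ν) < ∞ and ∫ u_ρ dν < ∞. -/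
open MeasureTheory ENNReal Filter Topology
open scoped ZeroAtInfty

noncomputable section

/-!
Perturbing the minimizer `ρ` towards a competitor `ν` along `(1 - t) ρ + t ν` changes the
energy by a quadratic polynomial in `t` vanishing at `0`, whose linear coefficient must
therefore be nonnegative: with the effective potential `h = u_ρ - (λ/2) v`, this says
`∫ h dρ ≤ ∫ h dν` for every admissible sub-probability `ν`. As `ν ↦ ∫ h dν` is linear,
comparing `ρ` with rescalings of `ρ` and of restrictions `ν|_S` shows that
`c = ∫ h dρ / ρ(ℝ^d)` satisfies `c ≤ 0`, `c = 0` if `ρ(ℝ^d) < 1`, and `c ν(S) ≤ ∫_S h dν`,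
i.e. `c ≤ h` `ν`-a.e. For `ν = ρ` this forces `h = c` `ρ`-a.e., because `∫ h dρ = c ρ(ℝ^d)`.
-/

lemma ZeroAtInftyContinuousMap.integrable {α : Type*} [TopologicalSpace α] [MeasurableSpace α]
    [OpensMeasurableSpace α] (v : C₀(α, ℝ)) (μ : Measure α) [IsFiniteMeasure μ] :
    Integrable v μ :=
  v.toBCF.integrable μ

variable {d : ℕ} {ℓ : ℝ → ℝ≥0∞}

local notation "X" => EuclideanSpace ℝ (Fin d)

lemma measurable_interaction (hℓ : LowerSemicontinuousOn ℓ (Set.Ici 0)) :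
    Measurable fun p : X × X => ℓ (dist p.1 p.2) :=
  (lowerSemicontinuousOn_univ_iff.1 <|
    hℓ.comp continuous_dist.continuousOn fun _ _ => dist_nonneg).measurable

lemma measurable_uPot (hℓ : Measurable fun p : X × X => ℓ (dist p.1 p.2))
    (ρ : Measure X) [SFinite ρ] : Measurable (uPot d ℓ ρ) :=
  hℓ.lintegral_prod_right

lemma Denergy_eq_lintegral_uPot (hℓ : Measurable fun p : X × X => ℓ (dist p.1 p.2))
    (ρ : Measure X) [SFinite ρ] : Denergy d ℓ ρ = ∫⁻ x, uPot d ℓ ρ x ∂ρ :=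
  lintegral_prod _ hℓ.aemeasurable

lemma lintegral_uPot_comm (hℓ : Measurable fun p : X × X => ℓ (dist p.1 p.2))
    (ρ ν : Measure X) [SFinite ρ] [SFinite ν] :
    ∫⁻ x, uPot d ℓ ρ x ∂ν = ∫⁻ x, uPot d ℓ ν x ∂ρ := by
  simp only [uPot]
  rw [lintegral_lintegral_swap hℓ.aemeasurable]
  simp only [dist_comm]

lemma uPot_add_smul (a b : ℝ≥0∞) (ρ ν : Measure X) (x : X) :
    uPot d ℓ (a • ρ + b • ν) x = a * uPot d ℓ ρ x + b * uPot d ℓ ν x := by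
  simp only [uPot, lintegral_add_measure, lintegral_smul_measure, smul_eq_mul]

lemma Denergy_add_smul (hℓ : Measurable fun p : X × X => ℓ (dist p.1 p.2))
    (a b : ℝ≥0∞) (ρ ν : Measure X) [SFinite ρ] [SFinite ν] :
    Denergy d ℓ (a • ρ + b • ν) =
      a ^ 2 * Denergy d ℓ ρ + 2 * a * b * ∫⁻ x, uPot d ℓ ρ x ∂ν + b ^ 2 * Denergy d ℓ ν := by
  have hρ := measurable_uPot hℓ ρ
  have hν := measurable_uPot hℓ ν
  simp only [Denergy_eq_lintegral_uPot hℓ, uPot_add_smul, lintegral_add_measure,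
    lintegral_smul_measure, smul_eq_mul]
  rw [lintegral_add_left (hρ.const_mul a), lintegral_add_left (hρ.const_mul a),
    lintegral_const_mul _ hρ, lintegral_const_mul _ hν, lintegral_const_mul _ hρ,
    lintegral_const_mul _ hν, lintegral_uPot_comm hℓ ν ρ]
  ring

lemma Denergy_smul (hℓ : Measurable fun p : X × X => ℓ (dist p.1 p.2))
    (a : ℝ≥0∞) (ρ : Measure X) [SFinite ρ] : Denergy d ℓ (a • ρ) = a ^ 2 * Denergy d ℓ ρ := by
  simpa using Denergy_add_smul hℓ a 0 ρ 0

lemma Denergy_mono (hℓ : Measurable fun p : X × X => ℓ (dist p.1 p.2))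
    {μ ν : Measure X} [SFinite μ] [SFinite ν] (h : μ ≤ ν) :
    Denergy d ℓ μ ≤ Denergy d ℓ ν := by
  rw [Denergy_eq_lintegral_uPot hℓ, Denergy_eq_lintegral_uPot hℓ]
  exact lintegral_mono' h fun x => lintegral_mono' h le_rfl

lemma toReal_Denergy_add_smul (hℓ : Measurable fun p : X × X => ℓ (dist p.1 p.2))
    {a b : ℝ} (ha : 0 ≤ a) (hb : 0 ≤ b) (ρ ν : Measure X) [SFinite ρ] [SFinite ν]
    (hρ : Denergy d ℓ ρ ≠ ⊤) (hν : Denergy d ℓ ν ≠ ⊤) (hρν : ∫⁻ x, uPot d ℓ ρ x ∂ν ≠ ⊤) :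
    (Denergy d ℓ (ENNReal.ofReal a • ρ + ENNReal.ofReal b • ν)).toReal =
      a ^ 2 * (Denergy d ℓ ρ).toReal + 2 * a * b * (∫⁻ x, uPot d ℓ ρ x ∂ν).toReal
        + b ^ 2 * (Denergy d ℓ ν).toReal := by
  rw [Denergy_add_smul hℓ, ENNReal.toReal_add (by finiteness) (by finiteness),
    ENNReal.toReal_add (by finiteness) (by finiteness)]
  simp [ENNReal.toReal_ofReal ha, ENNReal.toReal_ofReal hb]

lemma nonneg_of_forall_quadratic_nonneg {α β : ℝ}
    (h : ∀ t : ℝ, 0 < t → t ≤ 1 → 0 ≤ α * t ^ 2 + β * t) : 0 ≤ β := by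
  have hlim : Tendsto (fun t : ℝ => α * t + β) (𝓝[>] 0) (𝓝 β) :=
    (Continuous.tendsto' (by fun_prop) 0 β (by simp)).mono_left nhdsWithin_le_nhds
  refine ge_of_tendsto hlim ?_
  filter_upwards [Ioc_mem_nhdsGT one_pos] with t ht
  exact nonneg_of_mul_nonneg_right (by linear_combination h t ht.1 ht.2) ht.1

section Minimizer

variable (ℓ) in
def IsEnergyMinimizer (lam : ℝ) (v : C₀(X, ℝ)) (ρ : Measure X) : Prop :=
  ∀ σ : Measure X, σ Set.univ ≤ 1 →
    ((Denergy d ℓ ρ : ℝ≥0∞) : EReal) - ((lam * ∫ x, v x ∂ρ : ℝ) : EReal) ≤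
      ((Denergy d ℓ σ : ℝ≥0∞) : EReal) - ((lam * ∫ x, v x ∂σ : ℝ) : EReal)

variable (ℓ) in
def effectivePotential (lam : ℝ) (v : C₀(X, ℝ)) (ρ : Measure X) (x : X) : ℝ :=
  (uPot d ℓ ρ x).toReal - lam / 2 * v x

variable {lam : ℝ} {v : C₀(EuclideanSpace ℝ (Fin d), ℝ)} {ρ : Measure (EuclideanSpace ℝ (Fin d))}

lemma coe_uPot_eq_effectivePotential_add {x : X} (hx : uPot d ℓ ρ x ≠ ⊤) :
    ((uPot d ℓ ρ x : ℝ≥0∞) : EReal) =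
      ((effectivePotential ℓ lam v ρ x + lam / 2 * v x : ℝ) : EReal) := by
  rw [effectivePotential, sub_add_cancel, EReal.coe_ennreal_toReal hx]

lemma integrable_effectivePotential (hℓ : Measurable fun p : X × X => ℓ (dist p.1 p.2))
    [SFinite ρ] {ν : Measure X} [IsFiniteMeasure ν] (hI : ∫⁻ x, uPot d ℓ ρ x ∂ν ≠ ⊤) :
    Integrable (effectivePotential ℓ lam v ρ) ν :=
  (integrable_toReal_of_lintegral_ne_top (measurable_uPot hℓ ρ).aemeasurable hI).sub
    ((v.integrable ν).const_mul _)

lemma integral_effectivePotential (hℓ : Measurable fun p : X × X => ℓ (dist p.1 p.2))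
    [SFinite ρ] {ν : Measure X} [IsFiniteMeasure ν] (hI : ∫⁻ x, uPot d ℓ ρ x ∂ν ≠ ⊤) :
    ∫ x, effectivePotential ℓ lam v ρ x ∂ν =
      (∫⁻ x, uPot d ℓ ρ x ∂ν).toReal - lam / 2 * ∫ x, v x ∂ν := by
  have hu := measurable_uPot hℓ ρ
  unfold effectivePotential
  rw [integral_sub (integrable_toReal_of_lintegral_ne_top hu.aemeasurable hI)
    ((v.integrable ν).const_mul _), integral_const_mul,
    integral_toReal hu.aemeasurable (ae_lt_top hu hI)]

lemma IsEnergyMinimizer.Denergy_ne_top (hmin : IsEnergyMinimizer ℓ lam v ρ) :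
    Denergy d ℓ ρ ≠ ⊤ := by
  intro htop
  have h := hmin 0 (by simp)
  rw [htop, EReal.coe_ennreal_top, EReal.top_sub_coe] at h
  simp [Denergy] at h

lemma IsEnergyMinimizer.lintegral_uPot_self_ne_top
    (hℓ : Measurable fun p : X × X => ℓ (dist p.1 p.2)) (hmin : IsEnergyMinimizer ℓ lam v ρ)
    [SFinite ρ] : ∫⁻ x, uPot d ℓ ρ x ∂ρ ≠ ⊤ :=
  Denergy_eq_lintegral_uPot hℓ ρ ▸ hmin.Denergy_ne_top

lemma IsEnergyMinimizer.toReal_le (hmin : IsEnergyMinimizer ℓ lam v ρ) {σ : Measure X}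
    (hσ : σ Set.univ ≤ 1) (hσD : Denergy d ℓ σ ≠ ⊤) :
    (Denergy d ℓ ρ).toReal - lam * ∫ x, v x ∂ρ ≤ (Denergy d ℓ σ).toReal - lam * ∫ x, v x ∂σ := by
  have h := hmin σ hσ
  rw [← EReal.coe_ennreal_toReal hmin.Denergy_ne_top, ← EReal.coe_ennreal_toReal hσD,
    ← EReal.coe_sub, ← EReal.coe_sub] at h
  exact_mod_cast h

lemma IsEnergyMinimizer.integral_effectivePotential_le
    (hℓ : Measurable fun p : X × X => ℓ (dist p.1 p.2)) (hmin : IsEnergyMinimizer ℓ lam v ρ)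
    (hρ : ρ Set.univ ≤ 1) {ν : Measure X} (hν : ν Set.univ ≤ 1) (hνD : Denergy d ℓ ν ≠ ⊤)
    (hνI : ∫⁻ x, uPot d ℓ ρ x ∂ν ≠ ⊤) :
    ∫ x, effectivePotential ℓ lam v ρ x ∂ρ ≤ ∫ x, effectivePotential ℓ lam v ρ x ∂ν := by
  have : IsFiniteMeasure ρ := ⟨hρ.trans_lt one_lt_top⟩
  have : IsFiniteMeasure ν := ⟨hν.trans_lt one_lt_top⟩
  have hρD := hmin.Denergy_ne_top
  rw [integral_effectivePotential hℓ (hmin.lintegral_uPot_self_ne_top hℓ),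
    integral_effectivePotential hℓ hνI, ← Denergy_eq_lintegral_uPot hℓ]
  set I := (∫⁻ x, uPot d ℓ ρ x ∂ν).toReal
  set L := ∫ x, v x ∂ρ
  set L' := ∫ x, v x ∂ν
  suffices 0 ≤ 2 * (I - (Denergy d ℓ ρ).toReal) + lam * (L - L') by linarith
  refine nonneg_of_forall_quadratic_nonneg
    (α := (Denergy d ℓ ρ).toReal + (Denergy d ℓ ν).toReal - 2 * I) fun t ht0 ht1 => ?_
  have ht1' : 0 ≤ 1 - t := sub_nonneg.2 ht1
  set σ := ENNReal.ofReal (1 - t) • ρ + ENNReal.ofReal t • ν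
  have hσ : σ Set.univ ≤ 1 := calc
    σ Set.univ = ENNReal.ofReal (1 - t) * ρ Set.univ + ENNReal.ofReal t * ν Set.univ := rfl
    _ ≤ ENNReal.ofReal (1 - t) * 1 + ENNReal.ofReal t * 1 := by gcongr
    _ = 1 := by rw [mul_one, mul_one, ← ENNReal.ofReal_add ht1' ht0.le]; simp
  have hσD : Denergy d ℓ σ ≠ ⊤ := by
    rw [Denergy_add_smul hℓ]
    finiteness
  have hvσ : ∫ x, v x ∂σ = (1 - t) * L + t * L' := by
    rw [integral_add_measure ((v.integrable ρ).smul_measure ofReal_ne_top)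
      ((v.integrable ν).smul_measure ofReal_ne_top), integral_smul_measure,
      integral_smul_measure, ENNReal.toReal_ofReal ht1', ENNReal.toReal_ofReal ht0.le]
    rfl
  have h := hmin.toReal_le hσ hσD
  rw [toReal_Denergy_add_smul hℓ ht1' ht0.le ρ ν hρD hνD hνI, hvσ] at h
  linarith

lemma IsEnergyMinimizer.integral_effectivePotential_le_smul
    (hℓ : Measurable fun p : X × X => ℓ (dist p.1 p.2)) (hmin : IsEnergyMinimizer ℓ lam v ρ)
    (hρ : ρ Set.univ ≤ 1) {ν : Measure X} [SFinite ν] {t : ℝ≥0∞} (ht : t ≠ ⊤)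
    (htν : t * ν Set.univ ≤ 1) (hνD : Denergy d ℓ ν ≠ ⊤) (hνI : ∫⁻ x, uPot d ℓ ρ x ∂ν ≠ ⊤) :
    ∫ x, effectivePotential ℓ lam v ρ x ∂ρ ≤ t.toReal * ∫ x, effectivePotential ℓ lam v ρ x ∂ν := by
  have h := hmin.integral_effectivePotential_le hℓ hρ (ν := t • ν) htν
    (by rw [Denergy_smul hℓ]; finiteness) (by rw [lintegral_smul_measure, smul_eq_mul]; finiteness)
  rwa [integral_smul_measure] at h

-- For `ρ = 0` the division by zero returns `0`, which is the correct multiplier there.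
variable (ℓ) in
def lagrangeMultiplier (lam : ℝ) (v : C₀(X, ℝ)) (ρ : Measure X) : ℝ :=
  (∫ x, effectivePotential ℓ lam v ρ x ∂ρ) / ρ.real Set.univ

lemma integral_effectivePotential_self [IsFiniteMeasure ρ] :
    ∫ x, effectivePotential ℓ lam v ρ x ∂ρ = lagrangeMultiplier ℓ lam v ρ * ρ.real Set.univ := by
  rcases eq_or_ne (ρ Set.univ) 0 with h | h
  · simp [Measure.measure_univ_eq_zero.1 h]
  · exact (div_mul_cancel₀ _ (ENNReal.toReal_pos h (measure_ne_top ρ _)).ne').symm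

lemma IsEnergyMinimizer.lagrangeMultiplier_nonpos
    (hℓ : Measurable fun p : X × X => ℓ (dist p.1 p.2)) (hmin : IsEnergyMinimizer ℓ lam v ρ)
    (hρ : ρ Set.univ ≤ 1) : lagrangeMultiplier ℓ lam v ρ ≤ 0 := by
  have : IsFiniteMeasure ρ := ⟨hρ.trans_lt one_lt_top⟩
  refine div_nonpos_of_nonpos_of_nonneg ?_ measureReal_nonneg
  simpa using hmin.integral_effectivePotential_le_smul hℓ hρ zero_ne_top (by simp)
    hmin.Denergy_ne_top (hmin.lintegral_uPot_self_ne_top hℓ)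

lemma IsEnergyMinimizer.lagrangeMultiplier_eq_zero
    (hℓ : Measurable fun p : X × X => ℓ (dist p.1 p.2)) (hmin : IsEnergyMinimizer ℓ lam v ρ)
    (hρ : ρ Set.univ < 1) : lagrangeMultiplier ℓ lam v ρ = 0 := by
  have : IsFiniteMeasure ρ := ⟨hρ.trans one_lt_top⟩
  rcases eq_or_ne (ρ Set.univ) 0 with h0 | h0
  · simp [lagrangeMultiplier, Measure.real, h0]
  have hc := hmin.lagrangeMultiplier_nonpos hℓ hρ.le
  have h := hmin.integral_effectivePotential_le_smul hℓ hρ.le (ENNReal.inv_ne_top.2 h0)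
    (ENNReal.inv_mul_cancel h0 (measure_ne_top ρ _)).le
    hmin.Denergy_ne_top (hmin.lintegral_uPot_self_ne_top hℓ)
  have hm0 : 0 < ρ.real Set.univ := ENNReal.toReal_pos h0 (measure_ne_top ρ _)
  rw [integral_effectivePotential_self, ENNReal.toReal_inv, ← Measure.real,
    mul_left_comm, inv_mul_cancel₀ hm0.ne', mul_one] at h
  have hm1 : ρ.real Set.univ < 1 := by
    simpa [Measure.real] using ENNReal.toReal_strict_mono one_ne_top hρ
  nlinarith

lemma IsEnergyMinimizer.lagrangeMultiplier_mul_le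
    (hℓ : Measurable fun p : X × X => ℓ (dist p.1 p.2)) (hmin : IsEnergyMinimizer ℓ lam v ρ)
    (hρ : ρ Set.univ ≤ 1) {ν : Measure X} (hν : ν Set.univ ≤ 1) (hνD : Denergy d ℓ ν ≠ ⊤)
    (hνI : ∫⁻ x, uPot d ℓ ρ x ∂ν ≠ ⊤) :
    lagrangeMultiplier ℓ lam v ρ * ν.real Set.univ ≤ ∫ x, effectivePotential ℓ lam v ρ x ∂ν := by
  have : IsFiniteMeasure ρ := ⟨hρ.trans_lt one_lt_top⟩
  have : IsFiniteMeasure ν := ⟨hν.trans_lt one_lt_top⟩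
  have hle := hmin.integral_effectivePotential_le hℓ hρ hν hνD hνI
  rw [integral_effectivePotential_self] at hle
  rcases eq_or_ne (ρ Set.univ) 0 with hρ0 | hρ0
  · simpa [lagrangeMultiplier, Measure.real, hρ0] using hle
  rcases eq_or_ne (ν Set.univ) 0 with hν0 | hν0
  · simp [Measure.measure_univ_eq_zero.1 hν0]
  -- compare `ρ` with the rescaling of `ν` to the same mass
  have h := hmin.integral_effectivePotential_le_smul hℓ hρ
    (ENNReal.div_ne_top (measure_ne_top ρ _) hν0)
    (by rwa [ENNReal.div_mul_cancel hν0 (measure_ne_top ν _)]) hνD hνI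
  have hm : 0 < ρ.real Set.univ := ENNReal.toReal_pos hρ0 (measure_ne_top ρ _)
  have hn : 0 < ν.real Set.univ := ENNReal.toReal_pos hν0 (measure_ne_top ν _)
  rw [integral_effectivePotential_self, ENNReal.toReal_div, ← Measure.real, ← Measure.real,
    div_mul_eq_mul_div, le_div_iff₀ hn, mul_right_comm, mul_assoc] at h
  exact le_of_mul_le_mul_left (by linarith) hm

lemma IsEnergyMinimizer.ae_lagrangeMultiplier_le
    (hℓ : Measurable fun p : X × X => ℓ (dist p.1 p.2)) (hmin : IsEnergyMinimizer ℓ lam v ρ)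
    (hρ : ρ Set.univ ≤ 1) {ν : Measure X} (hν : ν Set.univ ≤ 1) (hνD : Denergy d ℓ ν ≠ ⊤)
    (hνI : ∫⁻ x, uPot d ℓ ρ x ∂ν ≠ ⊤) :
    ∀ᵐ x ∂ν, lagrangeMultiplier ℓ lam v ρ ≤ effectivePotential ℓ lam v ρ x := by
  have : IsFiniteMeasure ρ := ⟨hρ.trans_lt one_lt_top⟩
  have : IsFiniteMeasure ν := ⟨hν.trans_lt one_lt_top⟩
  refine ae_le_of_forall_setIntegral_le (integrable_const _)
    (integrable_effectivePotential hℓ hνI) fun s _ _ => ?_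
  rw [setIntegral_const, smul_eq_mul, mul_comm, ← measureReal_restrict_apply_univ]
  refine hmin.lagrangeMultiplier_mul_le hℓ hρ ?_ ?_ ?_
  · exact (Measure.restrict_le_self _).trans hν
  · exact ne_top_of_le_ne_top hνD (Denergy_mono hℓ Measure.restrict_le_self)
  · exact ne_top_of_le_ne_top hνI (lintegral_mono' Measure.restrict_le_self le_rfl)

lemma IsEnergyMinimizer.ae_effectivePotential_eq
    (hℓ : Measurable fun p : X × X => ℓ (dist p.1 p.2)) (hmin : IsEnergyMinimizer ℓ lam v ρ)
    (hρ : ρ Set.univ ≤ 1) :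
    ∀ᵐ x ∂ρ, effectivePotential ℓ lam v ρ x = lagrangeMultiplier ℓ lam v ρ := by
  have : IsFiniteMeasure ρ := ⟨hρ.trans_lt one_lt_top⟩
  have hρI := hmin.lintegral_uPot_self_ne_top hℓ
  have h := (integral_eq_iff_of_ae_le (integrable_const _) (integrable_effectivePotential hℓ hρI)
    (hmin.ae_lagrangeMultiplier_le hℓ hρ hρ hmin.Denergy_ne_top hρI)).1
    (by rw [integral_const, integral_effectivePotential_self, smul_eq_mul, mul_comm])
  filter_upwards [h] with x hx using hx.symm

end Minimizer

theorem statement_15_general (d : ℕ) (ℓ : ℝ → ℝ≥0∞)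
    (hl_lsc : LowerSemicontinuousOn ℓ (Set.Ici 0))
    (lam : ℝ)
    (v : C₀(EuclideanSpace ℝ (Fin d), ℝ))
    (ρ : Measure (EuclideanSpace ℝ (Fin d))) (hρ : ρ Set.univ ≤ 1)
    (hmin : ∀ σ : Measure (EuclideanSpace ℝ (Fin d)), σ Set.univ ≤ 1 →
      ((Denergy d ℓ ρ : ℝ≥0∞) : EReal) - ((lam * ∫ x, v x ∂ρ : ℝ) : EReal) ≤
        ((Denergy d ℓ σ : ℝ≥0∞) : EReal) - ((lam * ∫ x, v x ∂σ : ℝ) : EReal)) :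
    ∃ c : ℝ, c ≤ 0 ∧ (ρ Set.univ < 1 → c = 0) ∧
      (∀ᵐ x ∂ρ, ((uPot d ℓ ρ x : ℝ≥0∞) : EReal) = ((c + (lam / 2) * v x : ℝ) : EReal)) ∧
      (∀ ν : Measure (EuclideanSpace ℝ (Fin d)), ν Set.univ ≤ 1 →
        Denergy d ℓ ν ≠ ⊤ → (∫⁻ x, uPot d ℓ ρ x ∂ν) ≠ ⊤ →
        ∀ᵐ x ∂ν, ((c + (lam / 2) * v x : ℝ) : EReal) ≤ ((uPot d ℓ ρ x : ℝ≥0∞) : EReal)) := by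
  have hℓ := measurable_interaction (d := d) hl_lsc
  have hmin : IsEnergyMinimizer ℓ lam v ρ := hmin
  have : IsFiniteMeasure ρ := ⟨hρ.trans_lt one_lt_top⟩
  refine ⟨lagrangeMultiplier ℓ lam v ρ, hmin.lagrangeMultiplier_nonpos hℓ hρ,
    hmin.lagrangeMultiplier_eq_zero hℓ, ?_, fun ν hν hνD hνI => ?_⟩
  · filter_upwards [hmin.ae_effectivePotential_eq hℓ hρ,
      ae_lt_top (measurable_uPot hℓ ρ) (hmin.lintegral_uPot_self_ne_top hℓ)] with x hx hfin
    rw [coe_uPot_eq_effectivePotential_add hfin.ne, hx]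
  · filter_upwards [hmin.ae_lagrangeMultiplier_le hℓ hρ hν hνD hνI,
      ae_lt_top (measurable_uPot hℓ ρ) hνI] with x hx hfin
    rw [coe_uPot_eq_effectivePotential_add hfin.ne]
    exact EReal.coe_le_coe_iff.2 (add_le_add_left hx _)

/-- Euler–Lagrange optimality conditions for minimizers of
`D₂ - λ⟨v,·⟩` over sub-probabilities. -/
theorem statement_15 (d : ℕ) (hd : 1 ≤ d) (ℓ : ℝ → ℝ≥0∞)
    (hl_lsc : LowerSemicontinuousOn ℓ (Set.Ici 0))
    (hl0 : 0 < ℓ 0)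
    (hl_decay : Filter.Tendsto ℓ Filter.atTop (nhds 0))
    (lam : ℝ) (hlam : 0 ≤ lam)
    (v : C₀(EuclideanSpace ℝ (Fin d), ℝ)) (hv0 : ∀ x, 0 ≤ v x)
    (ρ : Measure (EuclideanSpace ℝ (Fin d))) (hρ : ρ Set.univ ≤ 1)
    (hmin : ∀ σ : Measure (EuclideanSpace ℝ (Fin d)), σ Set.univ ≤ 1 →
      ((Denergy d ℓ ρ : ℝ≥0∞) : EReal) - ((lam * ∫ x, v x ∂ρ : ℝ) : EReal) ≤
        ((Denergy d ℓ σ : ℝ≥0∞) : EReal) - ((lam * ∫ x, v x ∂σ : ℝ) : EReal)) :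
    ∃ c : ℝ, c ≤ 0 ∧ (ρ Set.univ < 1 → c = 0) ∧
      (∀ᵐ x ∂ρ, ((uPot d ℓ ρ x : ℝ≥0∞) : EReal) = ((c + (lam / 2) * v x : ℝ) : EReal)) ∧
      (∀ ν : Measure (EuclideanSpace ℝ (Fin d)), ν Set.univ ≤ 1 →
        Denergy d ℓ ν ≠ ⊤ → (∫⁻ x, uPot d ℓ ρ x ∂ν) ≠ ⊤ →
        ∀ᵐ x ∂ν, ((c + (lam / 2) * v x : ℝ) : EReal) ≤ ((uPot d ℓ ρ x : ℝ≥0∞) : EReal)) :=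
  statement_15_general d ℓ hl_lsc lam v ρ hρ hmin

end
end
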